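/- arXiv:math/0502063 — 9 statements merged into one kernel-verified Lean document; each statement's English description precedes it below -/
import Mathlib

section
/- For every integer n ≥ 1, the q-Bernoulli numbers satisfy the recurrence Σ_{i=0}^{n} C(n,i) q^i β_{i,q} − β_{n,q} = δ_{n,1}, i.e. the left-hand side equals 1 when n = 1 and equals 0 when n ≥ 2 (this is the relation (qβ_q + 1)^n − β_{n,q} = δ_{n,1} with the convention that β_q^i is replaced by β_{i,q}). -/
open scoped BigOperators

/-- The q-integer `[x]_q = (1 - q^x)/(1 - q)` (real exponent, via `rpow`). -/
noncomputable def qnum (q x : ℝ) : ℝ := (1 - q ^ x) / (1 - q)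

/-- `c_0(q) = (q-1)/log q` and `c_i(q) = i/[i]_q` for `i ≥ 1`. -/
noncomputable def qc (q : ℝ) : ℕ → ℝ
  | 0 => (q - 1) / Real.log q
  | (i + 1) => ((i : ℝ) + 1) / qnum q ((i : ℝ) + 1)

/-- The q-Bernoulli numbers `β_{n,q} = (1-q)^{-n} ∑_{i=0}^n C(n,i) (-1)^i c_i(q)`. -/
noncomputable def qBernoulli (q : ℝ) (n : ℕ) : ℝ :=
  (1 - q)⁻¹ ^ n * ∑ i ∈ Finset.range (n + 1), (n.choose i : ℝ) * (-1 : ℝ) ^ i * qc q i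

/-- The q-Bernoulli polynomials `β_{n,q}(x) = ∑_{i=0}^n C(n,i) q^{xi} β_{i,q} [x]_q^{n-i}`. -/
noncomputable def qBernoulliPoly (q : ℝ) (n : ℕ) (x : ℝ) : ℝ :=
  ∑ i ∈ Finset.range (n + 1),
    (n.choose i : ℝ) * q ^ (x * (i : ℝ)) * qBernoulli q i * qnum q x ^ (n - i)

/-- The generalized q-Bernoulli polynomials attached to a Dirichlet character `χ` mod `f`:
`β_{n,χ,q}(x) = [f]_q^{n-1} ∑_{a=1}^f χ(a) β_{n,q^f}((x+a)/f)`. -/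
noncomputable def genQBernoulliPoly {f : ℕ} (χ : DirichletCharacter ℂ f) (q : ℝ) (n : ℕ)
    (x : ℝ) : ℂ :=
  ((qnum q (f : ℝ) : ℝ) : ℂ) ^ ((n : ℤ) - 1) *
    ∑ a ∈ Finset.range f,
      χ ((a + 1 : ℕ) : ZMod f) * ((qBernoulliPoly (q ^ f) n ((x + ((a : ℝ) + 1)) / f) : ℝ) : ℂ)

lemma qc_key (q : ℝ) (hq0 : 0 < q) (hq1 : q < 1) (i : ℕ) :
    (q ^ (i + 1) - 1) * qc q (i + 1) = -(((i : ℝ) + 1)) * (1 - q) := by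
  have hpow : q ^ ((i : ℝ) + 1) = q ^ (i + 1) := by
    rw [show ((i : ℝ) + 1) = ((i + 1 : ℕ) : ℝ) by push_cast; ring, Real.rpow_natCast]
  have h1 : q ^ (i + 1) < 1 := pow_lt_one₀ hq0.le hq1 (Nat.succ_ne_zero i)
  have h2 : (1 : ℝ) - q ^ (i + 1) ≠ 0 := by linarith
  have h3 : (1 : ℝ) - q ≠ 0 := by intro h; linarith
  simp only [qc, qnum, hpow]
  field_simp
  ring

lemma qBern_inner_sum (q : ℝ) (h3 : (1 : ℝ) - q ≠ 0) {j n : ℕ} (hj : j ≤ n) :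
    ∑ i ∈ Finset.Ico j (n + 1), (n.choose i : ℝ) * (i.choose j : ℝ) * (q * (1 - q)⁻¹) ^ i
      = (n.choose j : ℝ) * q ^ j * (1 - q)⁻¹ ^ n := by
  set x : ℝ := q * (1 - q)⁻¹ with hx
  have hx1 : x + 1 = (1 - q)⁻¹ := by
    rw [hx]; field_simp; ring
  rw [Finset.sum_Ico_eq_sum_range, show n + 1 - j = (n - j) + 1 by omega]
  have hcong : ∀ k ∈ Finset.range (n - j + 1),
      ((n.choose (j + k) : ℝ)) * (((j + k).choose j : ℝ)) * x ^ (j + k)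
        = (n.choose j : ℝ) * x ^ j * (((n - j).choose k : ℝ) * x ^ k) := by
    intro k hk
    have hk' : k ≤ n - j := Nat.lt_succ_iff.mp (Finset.mem_range.mp hk)
    have h1 : n.choose (j + k) * (j + k).choose j = n.choose j * (n - j).choose k := by
      have := Nat.choose_mul (n := n) (Nat.le_add_right j k)
      simpa using this
    have h2 : ((n.choose (j + k) : ℝ)) * (((j + k).choose j : ℝ))
        = (n.choose j : ℝ) * ((n - j).choose k : ℝ) := by exact_mod_cast h1
    rw [pow_add]
    calc (n.choose (j+k) : ℝ) * ((j+k).choose j : ℝ) * (x ^ j * x ^ k)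
        = ((n.choose (j+k) : ℝ) * ((j+k).choose j : ℝ)) * (x ^ j * x ^ k) := by ring
      _ = ((n.choose j : ℝ) * ((n - j).choose k : ℝ)) * (x ^ j * x ^ k) := by rw [h2]
      _ = (n.choose j : ℝ) * x ^ j * (((n - j).choose k : ℝ) * x ^ k) := by ring
  rw [Finset.sum_congr rfl hcong, ← Finset.mul_sum]
  have hbin : ∑ k ∈ Finset.range (n - j + 1), (((n - j).choose k : ℝ)) * x ^ k
      = (x + 1) ^ (n - j) := by
    rw [add_pow]
    refine Finset.sum_congr rfl fun k _ => ?_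
    ring
  rw [hbin, hx1, hx, mul_pow]
  have hpow : (1 - q)⁻¹ ^ j * (1 - q)⁻¹ ^ (n - j) = (1 - q)⁻¹ ^ n := by
    rw [← pow_add]; congr 1; omega
  calc (n.choose j : ℝ) * (q ^ j * (1 - q)⁻¹ ^ j) * (1 - q)⁻¹ ^ (n - j)
      = (n.choose j : ℝ) * q ^ j * ((1 - q)⁻¹ ^ j * (1 - q)⁻¹ ^ (n - j)) := by ring
    _ = _ := by rw [hpow]

theorem qBernoulli_recurrence (q : ℝ) (hq0 : 0 < q) (hq1 : q < 1) (n : ℕ) (hn : 1 ≤ n) :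
    (∑ i ∈ Finset.range (n + 1), (n.choose i : ℝ) * q ^ i * qBernoulli q i) - qBernoulli q n
      = if n = 1 then 1 else 0 := by
  obtain ⟨m, rfl⟩ : ∃ m, n = m + 1 := ⟨n - 1, by omega⟩
  have h3 : (1 : ℝ) - q ≠ 0 := by intro h; linarith
  set N := m + 1 with hN
  have step1 : ∑ i ∈ Finset.range (N + 1), (N.choose i : ℝ) * q ^ i * qBernoulli q i
      = ∑ i ∈ Finset.range (N + 1), ∑ j ∈ Finset.range (i + 1),
          (N.choose i : ℝ) * (i.choose j : ℝ) * (q * (1 - q)⁻¹) ^ i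
            * ((-1 : ℝ) ^ j * qc q j) := by
    refine Finset.sum_congr rfl fun i _ => ?_
    rw [qBernoulli]
    simp only [Finset.mul_sum]
    refine Finset.sum_congr rfl fun j _ => ?_
    rw [mul_pow]
    ring
  have step2 : ∑ i ∈ Finset.range (N + 1), ∑ j ∈ Finset.range (i + 1),
          (N.choose i : ℝ) * (i.choose j : ℝ) * (q * (1 - q)⁻¹) ^ i
            * ((-1 : ℝ) ^ j * qc q j)
      = ∑ j ∈ Finset.range (N + 1), ∑ i ∈ Finset.Ico j (N + 1),
          (N.choose i : ℝ) * (i.choose j : ℝ) * (q * (1 - q)⁻¹) ^ i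
            * ((-1 : ℝ) ^ j * qc q j) := by
    simp only [Finset.range_eq_Ico]
    exact (Finset.sum_Ico_Ico_comm 0 (N + 1) fun j i =>
      (N.choose i : ℝ) * (i.choose j : ℝ) * (q * (1 - q)⁻¹) ^ i
        * ((-1 : ℝ) ^ j * qc q j)).symm
  have step3 : ∀ j ∈ Finset.range (N + 1),
      ∑ i ∈ Finset.Ico j (N + 1),
          (N.choose i : ℝ) * (i.choose j : ℝ) * (q * (1 - q)⁻¹) ^ i
            * ((-1 : ℝ) ^ j * qc q j)
        = (1 - q)⁻¹ ^ N * ((N.choose j : ℝ) * (-1) ^ j * q ^ j * qc q j) := by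
    intro j hj
    rw [← Finset.sum_mul,
      qBern_inner_sum q h3 (Nat.lt_succ_iff.mp (Finset.mem_range.mp hj))]
    ring
  have hsum : (∑ i ∈ Finset.range (N + 1), (N.choose i : ℝ) * q ^ i * qBernoulli q i)
        - qBernoulli q N
      = (1 - q)⁻¹ ^ N * ∑ j ∈ Finset.range (N + 1),
          (N.choose j : ℝ) * (-1 : ℝ) ^ j * (q ^ j - 1) * qc q j := by
    rw [step1, step2, Finset.sum_congr rfl step3, ← Finset.mul_sum, qBernoulli, ← mul_sub,
      ← Finset.sum_sub_distrib]
    congr 1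
    refine Finset.sum_congr rfl fun j _ => ?_
    ring
  have step4 : ∑ j ∈ Finset.range (N + 1),
        (N.choose j : ℝ) * (-1 : ℝ) ^ j * (q ^ j - 1) * qc q j
      = (1 - q) * ((m : ℝ) + 1) * (if m = 0 then 1 else 0) := by
    rw [Finset.sum_range_succ']
    have h0 : (N.choose 0 : ℝ) * (-1 : ℝ) ^ 0 * (q ^ 0 - 1) * qc q 0 = 0 := by simp
    rw [h0, add_zero]
    have hterm : ∀ i ∈ Finset.range N,
        (N.choose (i + 1) : ℝ) * (-1 : ℝ) ^ (i + 1) * (q ^ (i + 1) - 1) * qc q (i + 1)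
          = (1 - q) * ((m : ℝ) + 1) * ((-1 : ℝ) ^ i * (m.choose i : ℝ)) := by
      intro i _
      have hkey := qc_key q hq0 hq1 i
      have hch : ((m + 1).choose (i + 1) : ℝ) * ((i : ℝ) + 1)
          = ((m : ℝ) + 1) * (m.choose i : ℝ) := by
        have := (Nat.add_one_mul_choose_eq m i).symm
        exact_mod_cast congrArg (fun t : ℕ => (t : ℝ)) this
      calc (N.choose (i + 1) : ℝ) * (-1 : ℝ) ^ (i + 1) * (q ^ (i + 1) - 1) * qc q (i + 1)
          = ((N.choose (i + 1) : ℝ) * (-1 : ℝ) ^ (i + 1))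
              * ((q ^ (i + 1) - 1) * qc q (i + 1)) := by ring
        _ = ((N.choose (i + 1) : ℝ) * (-1 : ℝ) ^ (i + 1))
              * (-(((i : ℝ) + 1)) * (1 - q)) := by rw [hkey]
        _ = (1 - q) * ((-1 : ℝ) ^ i * (((m + 1).choose (i + 1) : ℝ) * ((i : ℝ) + 1))) := by
              rw [hN, pow_succ]; ring
        _ = (1 - q) * ((m : ℝ) + 1) * ((-1 : ℝ) ^ i * (m.choose i : ℝ)) := by
              rw [hch]; ring
    rw [Finset.sum_congr rfl hterm, ← Finset.mul_sum]
    congr 1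
    by_cases hm : m = 0
    · subst hm
      rw [if_pos rfl, hN]
      simp
    · rw [if_neg hm]
      exact_mod_cast Int.alternating_sum_range_choose_of_ne hm
  rw [hsum, step4]
  by_cases hm : m = 0
  · subst hm
    rw [if_pos rfl, if_pos rfl]
    simp only [hN]
    field_simp
    simp [h3]
  · rw [if_neg hm, if_neg (show ¬ N = 1 by omega)]
    simp
end

section
/- For every integer n ≥ 0 and every x ∈ ℝ, the q-Bernoulli polynomial admits the closed form β_{n,q}(x) = (1−q)^{−n} Σ_{i=0}^{n} C(n,i) (−q^x)^i c_i(q). -/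
open scoped BigOperators

lemma key_binom (t : ℝ) (g : ℕ → ℝ) (n : ℕ) :
    (∑ i ∈ Finset.range (n + 1), (n.choose i : ℝ) * t ^ i * (1 - t) ^ (n - i) *
      ∑ j ∈ Finset.range (i + 1), (i.choose j : ℝ) * g j)
    = ∑ j ∈ Finset.range (n + 1), (n.choose j : ℝ) * t ^ j * g j := by
  simp only [Finset.mul_sum]
  rw [Finset.range_eq_Ico]
  have swap := Finset.sum_Ico_Ico_comm 0 (n + 1)
    (fun j i => (n.choose i : ℝ) * t ^ i * (1 - t) ^ (n - i) * ((i.choose j : ℝ) * g j))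
  simp only [Nat.Ico_zero_eq_range] at swap ⊢
  rw [← swap]
  refine Finset.sum_congr rfl fun j hj => ?_
  rw [Finset.mem_range] at hj
  have hjn : j ≤ n := Nat.lt_succ_iff.mp hj
  set m := n - j with hm
  have h1 : n + 1 - j = m + 1 := by omega
  rw [Finset.sum_Ico_eq_sum_range, h1]
  have hterm : ∀ k ∈ Finset.range (m + 1),
      (n.choose (j + k) : ℝ) * t ^ (j + k) * (1 - t) ^ (n - (j + k)) *
        (((j + k).choose j : ℝ) * g j)
      = ((n.choose j : ℝ) * t ^ j * g j) * (t ^ k * (1 - t) ^ (m - k) * (m.choose k : ℝ)) := by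
    intro k hk
    rw [Finset.mem_range] at hk
    have hkm : k ≤ m := Nat.lt_succ_iff.mp hk
    have hc : (n.choose (j + k) : ℝ) * ((j + k).choose j : ℝ)
        = (n.choose j : ℝ) * (m.choose k : ℝ) := by
      rw [← Nat.cast_mul, ← Nat.cast_mul, Nat.choose_mul (by omega)]
      congr 3 <;> omega
    have h2 : n - (j + k) = m - k := by omega
    rw [pow_add, h2]
    linear_combination (t ^ j * t ^ k * (1 - t) ^ (m - k) * g j) * hc
  rw [Finset.sum_congr rfl hterm, ← Finset.mul_sum]
  have hb : (∑ k ∈ Finset.range (m + 1), t ^ k * (1 - t) ^ (m - k) * (m.choose k : ℝ)) = 1 := by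
    have := add_pow t (1 - t) m
    simp at this
    rw [← this]
  rw [hb, mul_one]

theorem qBernoulliPoly_closed_form (q : ℝ) (hq0 : 0 < q) (hq1 : q < 1) (n : ℕ) (x : ℝ) :
    qBernoulliPoly q n x
      = (1 - q)⁻¹ ^ n *
          ∑ i ∈ Finset.range (n + 1), (n.choose i : ℝ) * (-(q ^ x)) ^ i * qc q i := by
  set t : ℝ := q ^ x with ht
  have hmain := key_binom t (fun j => (-1 : ℝ) ^ j * qc q j) n
  unfold qBernoulliPoly qBernoulli qnum
  have hstep : ∀ i ∈ Finset.range (n + 1),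
      (n.choose i : ℝ) * q ^ (x * (i : ℝ)) *
        ((1 - q)⁻¹ ^ i * ∑ j ∈ Finset.range (i + 1), (i.choose j : ℝ) * (-1 : ℝ) ^ j * qc q j) *
        ((1 - q ^ x) / (1 - q)) ^ (n - i)
      = (1 - q)⁻¹ ^ n * ((n.choose i : ℝ) * t ^ i * (1 - t) ^ (n - i) *
          ∑ j ∈ Finset.range (i + 1), (i.choose j : ℝ) * ((-1 : ℝ) ^ j * qc q j)) := by
    intro i hi
    rw [Finset.mem_range] at hi
    have hin : i ≤ n := Nat.lt_succ_iff.mp hi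
    have hrp : q ^ (x * (i : ℝ)) = t ^ i := by
      rw [Real.rpow_mul hq0.le, ← ht, Real.rpow_natCast]
    have hpow : (1 - q)⁻¹ ^ i * (1 - q)⁻¹ ^ (n - i) = (1 - q)⁻¹ ^ n := by
      rw [← pow_add]; congr 1; omega
    rw [hrp, div_pow, div_eq_mul_inv, ← inv_pow, ← ht]
    simp only [mul_assoc]
    rw [← hpow]
    ring
  rw [Finset.sum_congr rfl hstep, ← Finset.mul_sum, hmain]
  congr 1
  refine Finset.sum_congr rfl fun i _ => ?_
  rw [neg_pow t i]
  ring
end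

section
/- For every t ∈ ℂ with |t| < 1, the series Σ_{n=0}^{∞} β_{n,q} t^n/n! converges and equals ((q−1)/log q)·e^{t/(1−q)} − t·Σ_{n=0}^{∞} q^n e^{[n]_q t} (the generating-function identity for the q-Bernoulli numbers; both series converge absolutely). -/
open scoped BigOperators

lemma exp_tsum (z : ℂ) : Complex.exp z = ∑' n : ℕ, z ^ n / (n.factorial : ℂ) := by
  rw [Complex.exp_eq_exp_ℂ, NormedSpace.exp_eq_tsum_div]

lemma qnum_natCast (q : ℝ) (n : ℕ) : qnum q (n : ℝ) = (1 - q ^ n) / (1 - q) := by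
  rw [qnum, Real.rpow_natCast]

lemma qnum_succ (q : ℝ) (i : ℕ) : qnum q ((i : ℝ) + 1) = (1 - q ^ (i + 1)) / (1 - q) := by
  have : ((i : ℝ) + 1) = ((i + 1 : ℕ) : ℝ) := by push_cast; ring
  rw [this, qnum_natCast]

lemma one_le_qnum_succ {q : ℝ} (hq0 : 0 < q) (hq1 : q < 1) (i : ℕ) :
    1 ≤ qnum q ((i : ℝ) + 1) := by
  rw [qnum_succ]
  have h1 : q ^ (i + 1) ≤ q ^ 1 := pow_le_pow_of_le_one hq0.le hq1.le (by omega)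
  rw [le_div_iff₀ (by linarith)]
  simp at h1 ⊢; linarith

lemma qc_nonneg {q : ℝ} (hq0 : 0 < q) (hq1 : q < 1) (i : ℕ) : 0 ≤ qc q i := by
  cases i with
  | zero =>
    have hl : Real.log q < 0 := Real.log_neg hq0 hq1
    show 0 ≤ (q - 1) / Real.log q
    apply div_nonneg_of_nonpos (by linarith) hl.le
  | succ i =>
    have := one_le_qnum_succ hq0 hq1 i
    exact div_nonneg (by positivity) (by linarith)

lemma qc_le {q : ℝ} (hq0 : 0 < q) (hq1 : q < 1) (i : ℕ) : qc q i ≤ (i : ℝ) + 1 := by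
  cases i with
  | zero =>
    have hl : Real.log q < 0 := Real.log_neg hq0 hq1
    have h2 : Real.log q ≤ q - 1 := Real.log_le_sub_one_of_pos hq0
    show (q - 1) / Real.log q ≤ _
    have h0 : ((0:ℕ) : ℝ) + 1 = 1 := by norm_num
    rw [h0]
    rw [show (q - 1) / Real.log q = (1 - q) / (-Real.log q) by
      rw [div_eq_div_iff hl.ne (by linarith)]; ring]
    rw [div_le_iff₀ (by linarith)]
    nlinarith
  | succ i =>
    have h := one_le_qnum_succ hq0 hq1 i
    calc qc q (i + 1) = ((i : ℝ) + 1) / qnum q ((i : ℝ) + 1) := rfl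
      _ ≤ ((i : ℝ) + 1) / 1 := by
          apply div_le_div_of_nonneg_left (by positivity) one_pos h
      _ ≤ (↑(i + 1) : ℝ) + 1 := by push_cast; linarith

set_option maxHeartbeats 1000000 in
theorem qBernoulli_generatingFunction (q : ℝ) (hq0 : 0 < q) (hq1 : q < 1)
    (t : ℂ) (ht : ‖t‖ < 1) :
    Summable (fun n : ℕ => ‖((qBernoulli q n : ℝ) : ℂ) * t ^ n / (Nat.factorial n : ℂ)‖) ∧
    Summable (fun n : ℕ =>
      ‖(q : ℂ) ^ n * Complex.exp (((qnum q (n : ℝ) : ℝ) : ℂ) * t)‖) ∧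
    ∑' n : ℕ, ((qBernoulli q n : ℝ) : ℂ) * t ^ n / (Nat.factorial n : ℂ)
      = (((q - 1) / Real.log q : ℝ) : ℂ) * Complex.exp (t / ((1 - q : ℝ) : ℂ))
        - t * ∑' n : ℕ, (q : ℂ) ^ n * Complex.exp (((qnum q (n : ℝ) : ℝ) : ℂ) * t) := by
  have hq : (1 : ℝ) - q ≠ 0 := by linarith
  have hqC : ((1 - q : ℝ) : ℂ) ≠ 0 := Complex.ofReal_ne_zero.mpr hq
  set u : ℂ := t / ((1 - q : ℝ) : ℂ) with hu
  have htu : t = ((1 - q : ℝ) : ℂ) * u := by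
    rw [hu, mul_div_cancel₀]; exact hqC
  set A : ℕ → ℂ := fun i => ((qc q i : ℝ) : ℂ) * (-u) ^ i / (i.factorial : ℂ) with hA_def
  set B : ℕ → ℂ := fun j => u ^ j / (j.factorial : ℂ) with hB_def
  -- summability of A, B in norm
  have hnormA : ∀ i, ‖A i‖ = |qc q i| * ‖u‖ ^ i / (i.factorial : ℝ) := by
    intro i
    simp [hA_def, norm_div, norm_mul, norm_pow, Complex.norm_real, Real.norm_eq_abs]
  have hA : Summable fun i => ‖A i‖ := by
    apply Summable.of_nonneg_of_le (fun i => norm_nonneg _) _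
      (Real.summable_pow_div_factorial (2 * ‖u‖))
    intro i
    rw [hnormA i, mul_pow]
    have h1 : |qc q i| ≤ (i : ℝ) + 1 := by
      rw [abs_of_nonneg (qc_nonneg hq0 hq1 i)]; exact qc_le hq0 hq1 i
    have h2 : ((i : ℝ) + 1) ≤ 2 ^ i := by
      have : i < 2 ^ i := Nat.lt_two_pow_self
      have : (i : ℝ) + 1 ≤ ((2 ^ i : ℕ) : ℝ) := by exact_mod_cast this
      simpa using this
    gcongr
    exact (h1.trans h2)
  have hB : Summable fun j => ‖B j‖ := by
    apply Summable.congr (Real.summable_pow_div_factorial ‖u‖)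
    intro j
    simp [hB_def, norm_div, norm_pow]
  -- key pointwise identity
  have key : ∀ n : ℕ, ((qBernoulli q n : ℝ) : ℂ) * t ^ n / (n.factorial : ℂ)
      = ∑ i ∈ Finset.range (n + 1), A i * B (n - i) := by
    intro n
    have hfn : ((n.factorial : ℕ) : ℂ) ≠ 0 := Nat.cast_ne_zero.mpr n.factorial_ne_zero
    rw [qBernoulli, htu]
    push_cast
    rw [mul_pow]
    rw [show ((1 : ℂ) - q)⁻¹ ^ n * (∑ i ∈ Finset.range (n + 1),
        (n.choose i : ℂ) * (-1 : ℂ) ^ i * (qc q i : ℂ)) * (((1 : ℂ) - q) ^ n * u ^ n)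
        / (n.factorial : ℂ)
        = (∑ i ∈ Finset.range (n + 1), (n.choose i : ℂ) * (-1 : ℂ) ^ i * (qc q i : ℂ))
          * u ^ n / (n.factorial : ℂ) * (((1 : ℂ) - q)⁻¹ ^ n * ((1 : ℂ) - q) ^ n) by ring]
    rw [← mul_pow, inv_mul_cancel₀ (by push_cast at hqC ⊢; exact hqC), one_pow, mul_one]
    rw [Finset.sum_mul, Finset.sum_div]
    apply Finset.sum_congr rfl
    intro i hi
    have hi' : i ≤ n := Nat.lt_succ_iff.mp (Finset.mem_range.mp hi)
    have hch : ((n.choose i : ℕ) : ℂ) * (i.factorial : ℂ) * ((n - i).factorial : ℂ)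
        = (n.factorial : ℂ) := by
      exact_mod_cast congrArg (Nat.cast (R := ℂ)) (Nat.choose_mul_factorial_mul_factorial hi')
    have hpow : u ^ n = u ^ i * u ^ (n - i) := by
      rw [← pow_add, Nat.add_sub_cancel' hi']
    have hfi : ((i.factorial : ℕ) : ℂ) ≠ 0 := Nat.cast_ne_zero.mpr i.factorial_ne_zero
    have hfni : (((n - i).factorial : ℕ) : ℂ) ≠ 0 :=
      Nat.cast_ne_zero.mpr (n - i).factorial_ne_zero
    simp only [hA_def, hB_def]
    rw [neg_pow, hpow]
    field_simp
    linear_combination ((qc q i : ℂ) * (-1 : ℂ) ^ i * u ^ i * u ^ (n - i)) * hch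
  refine ⟨?_, ?_, ?_⟩
  · apply Summable.congr (summable_norm_sum_mul_range_of_summable_norm hA hB)
    intro n
    rw [key n]
  · have hM : (0:ℝ) < 1 - q := by linarith
    apply Summable.of_nonneg_of_le (fun n => norm_nonneg _) _
      ((summable_geometric_of_lt_one hq0.le hq1).mul_right (Real.exp (‖t‖ / (1 - q))))
    intro n
    have hqn : qnum q (n : ℝ) = (1 - q ^ n) / (1 - q) := qnum_natCast q n
    have hp1 : q ^ n ≤ 1 := pow_le_one₀ hq0.le hq1.le
    have h0 : (0:ℝ) ≤ qnum q (n:ℝ) := by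
      rw [hqn]; apply div_nonneg _ hM.le; linarith
    have h1 : qnum q (n:ℝ) ≤ 1 / (1 - q) := by
      rw [hqn, div_le_div_iff₀ hM hM]
      have : (0:ℝ) ≤ q ^ n := by positivity
      nlinarith
    simp only [norm_mul, norm_pow, Complex.norm_exp]
    have hre : (((qnum q (n:ℝ) : ℝ) : ℂ) * t).re = qnum q (n:ℝ) * t.re := by
      simp [Complex.mul_re]
    rw [hre]
    have hq' : ‖(q:ℂ)‖ = q := by
      rw [Complex.norm_real, Real.norm_eq_abs, abs_of_pos hq0]
    rw [hq']
    apply mul_le_mul_of_nonneg_left _ (pow_nonneg hq0.le n)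
    apply Real.exp_le_exp.mpr
    have hre2 : t.re ≤ ‖t‖ := by exact Complex.re_le_norm t
    calc qnum q (n:ℝ) * t.re ≤ qnum q (n:ℝ) * ‖t‖ := mul_le_mul_of_nonneg_left hre2 h0
      _ ≤ (1 / (1 - q)) * ‖t‖ := mul_le_mul_of_nonneg_right h1 (norm_nonneg t)
      _ = ‖t‖ / (1 - q) := by ring
  · have hM : (0:ℝ) < 1 - q := by linarith
    have hA' : Summable A := hA.of_norm
    set f : ℕ → ℕ → ℂ :=
      fun i n => ((1 - q : ℝ) : ℂ) * (-(u * (q : ℂ) ^ n)) ^ (i + 1) / (i.factorial : ℂ)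
      with hf_def
    have hqabs : ‖(q:ℂ)‖ = q := by rw [Complex.norm_real, Real.norm_eq_abs, abs_of_pos hq0]
    -- summability of the uncurried double family
    have hfnorm : ∀ p : ℕ × ℕ, ‖Function.uncurry f p‖
        ≤ ((1 - q) * ‖u‖ * (‖u‖ ^ p.1 / (p.1.factorial : ℝ))) * q ^ p.2 := by
      rintro ⟨i, n⟩
      have heq : ‖Function.uncurry f (i, n)‖
          = (1 - q) * ((‖u‖ * q ^ n) ^ (i + 1)) / (i.factorial : ℝ) := by
        have habs1 : ‖(1:ℂ) - (q:ℂ)‖ = 1 - q := by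
          rw [show (1:ℂ) - (q:ℂ) = ((1 - q : ℝ):ℂ) by push_cast; ring, Complex.norm_real,
            Real.norm_eq_abs, abs_of_pos hM]
        simp [Function.uncurry, hf_def, norm_div, norm_mul, norm_pow,
          Complex.norm_real, abs_of_pos hM, hqabs, Complex.norm_natCast, habs1,
          abs_of_pos hq0]
      rw [heq]
      calc (1 - q) * ((‖u‖ * q ^ n) ^ (i + 1)) / (i.factorial : ℝ)
          = (1 - q) * (‖u‖ ^ (i + 1) * q ^ (n * (i + 1))) / (i.factorial : ℝ) := by
            rw [mul_pow, ← pow_mul]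
        _ ≤ (1 - q) * (‖u‖ ^ (i + 1) * q ^ n) / (i.factorial : ℝ) := by
            have hple : q ^ (n * (i + 1)) ≤ q ^ n :=
              pow_le_pow_of_le_one hq0.le hq1.le (Nat.le_mul_of_pos_right n i.succ_pos)
            have h1 : ‖u‖ ^ (i+1) * q ^ (n * (i+1)) ≤ ‖u‖ ^ (i+1) * q ^ n :=
              mul_le_mul_of_nonneg_left hple (by positivity)
            have h2 := mul_le_mul_of_nonneg_left h1 hM.le
            exact (div_le_div_iff_of_pos_right (by positivity)).mpr h2
        _ = ((1 - q) * ‖u‖ * (‖u‖ ^ i / (i.factorial : ℝ))) * q ^ n := by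
            rw [pow_succ]; ring
    have hg1 : Summable (fun i : ℕ => (1 - q) * ‖u‖ * (‖u‖ ^ i / (i.factorial : ℝ))) :=
      (Real.summable_pow_div_factorial ‖u‖).mul_left _
    have hg2 : Summable (fun n : ℕ => q ^ n) := summable_geometric_of_lt_one hq0.le hq1
    have hmaj : Summable (fun p : ℕ × ℕ =>
        ((1 - q) * ‖u‖ * (‖u‖ ^ p.1 / (p.1.factorial : ℝ))) * q ^ p.2) :=
      Summable.mul_of_nonneg hg1 hg2
        (fun i => mul_nonneg (mul_nonneg hM.le (norm_nonneg u)) (by positivity))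
        (fun n => by positivity)
    have hfsum : Summable (Function.uncurry f) :=
      Summable.of_norm (Summable.of_nonneg_of_le (fun _ => norm_nonneg _) hfnorm hmaj)
    -- per-i identity : A (i+1) is the sum over n of f i n
    have hAi : ∀ i : ℕ, A (i + 1) = ∑' n : ℕ, f i n := by
      intro i
      have hql : q ^ (i + 1) < 1 := pow_lt_one₀ hq0.le hq1 (by omega)
      have hgeo : ∑' n : ℕ, ((q:ℂ) ^ (i+1)) ^ n = (1 - (q:ℂ) ^ (i+1))⁻¹ := by
        apply tsum_geometric_of_norm_lt_one
        rw [norm_pow, hqabs]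
        exact hql
      have hrw : ∀ n : ℕ, f i n
          = ((1 - q : ℝ):ℂ) * (-u) ^ (i+1) / (i.factorial : ℂ) * ((q:ℂ) ^ (i+1)) ^ n := by
        intro n
        simp only [hf_def]
        rw [show -(u * (q:ℂ) ^ n) = (-u) * (q:ℂ) ^ n by ring, mul_pow, ← pow_mul, ← pow_mul,
          Nat.mul_comm n (i+1)]
        ring
      rw [tsum_congr hrw, tsum_mul_left, hgeo]
      show ((qc q (i+1) : ℝ):ℂ) * (-u) ^ (i+1) / ((i+1).factorial : ℂ) = _
      have hqc : qc q (i + 1) = ((i:ℝ) + 1) * (1 - q) / (1 - q ^ (i+1)) := by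
        show ((i:ℝ) + 1) / qnum q ((i:ℝ) + 1) = _
        rw [qnum_succ, div_div_eq_mul_div]
      have hpq : (1:ℂ) - (q:ℂ) ^ (i+1) ≠ 0 := by
        have h1 : ((1 - q ^ (i+1) : ℝ) : ℂ) ≠ 0 := Complex.ofReal_ne_zero.mpr (by nlinarith)
        push_cast at h1
        exact h1
      have hfact : (((i+1).factorial : ℕ) : ℂ) = ((i:ℂ) + 1) * (i.factorial : ℂ) := by
        rw [Nat.factorial_succ]; push_cast; ring
      have hfi : ((i.factorial : ℕ) : ℂ) ≠ 0 := Nat.cast_ne_zero.mpr i.factorial_ne_zero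
      rw [hqc, hfact]
      push_cast
      have hi1 : ((i:ℂ) + 1) ≠ 0 := by
        have : ((i:ℂ) + 1) = ((i + 1 : ℕ) : ℂ) := by push_cast; ring
        rw [this]
        exact Nat.cast_ne_zero.mpr (by omega)
      field_simp
    have hswap : ∑' i : ℕ, ∑' n : ℕ, f i n = ∑' n : ℕ, ∑' i : ℕ, f i n :=
      (Summable.tsum_comm hfsum).symm
    have hinner : ∀ n : ℕ, ∑' i : ℕ, f i n
        = -t * ((q:ℂ) ^ n * Complex.exp (-(u * (q:ℂ) ^ n))) := by
      intro n
      have hrw : ∀ i : ℕ, f i n = (((1 - q : ℝ):ℂ) * (-(u * (q:ℂ) ^ n)))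
          * ((-(u * (q:ℂ) ^ n)) ^ i / (i.factorial : ℂ)) := by
        intro i
        simp only [hf_def]
        rw [pow_succ]
        ring
      rw [tsum_congr hrw, tsum_mul_left, ← exp_tsum, htu]
      ring
    have hsumA : ∑' i : ℕ, A i
        = ((qc q 0 : ℝ):ℂ) + -t * ∑' n : ℕ, (q:ℂ) ^ n * Complex.exp (-(u * (q:ℂ) ^ n)) := by
      rw [Summable.tsum_eq_zero_add hA']
      congr 1
      · simp [hA_def]
      · rw [tsum_congr hAi, hswap, tsum_congr hinner, tsum_mul_left]
    have hE : ∀ n : ℕ, (q:ℂ) ^ n * Complex.exp (((qnum q (n:ℝ) : ℝ):ℂ) * t)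
        = ((q:ℂ) ^ n * Complex.exp (-(u * (q:ℂ) ^ n))) * Complex.exp u := by
      intro n
      rw [mul_assoc, ← Complex.exp_add]
      congr 2
      rw [qnum_natCast]
      push_cast
      rw [hu]
      push_cast
      field_simp
      ring
    have hcalc : ∑' n : ℕ, ((qBernoulli q n : ℝ):ℂ) * t ^ n / (n.factorial : ℂ)
        = (∑' i : ℕ, A i) * Complex.exp u := by
      rw [tsum_congr key, ← tsum_mul_tsum_eq_tsum_sum_range_of_summable_norm hA hB, ← exp_tsum]
    rw [hcalc, hsumA, tsum_congr hE, tsum_mul_right]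
    have hc0 : ((q - 1) / Real.log q : ℝ) = qc q 0 := rfl
    rw [hc0]
    ring
end

section
/- (Distribution relation, Lemma 1.) Let g be any positive integer multiple of the conductor f of χ. Then for every integer n ≥ 0 and every x ∈ ℝ, β_{n,χ,q}(x) = [g]_q^{n−1} Σ_{a=1}^{g} χ(a) β_{n,q^g}((x+a)/g). -/
open scoped BigOperators

open Finset

lemma inner_binom (n k : ℕ) (hk : k ≤ n) (T : ℝ) :
    ∑ i ∈ range (n+1), (n.choose i : ℝ) * (i.choose k : ℝ) * T^i * (1-T)^(n-i)
      = (n.choose k : ℝ) * T^k := by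
  have h1 : ∑ i ∈ range (n+1), (n.choose i : ℝ) * (i.choose k : ℝ) * T^i * (1-T)^(n-i)
      = ∑ i ∈ Ico k (n+1), (n.choose i : ℝ) * (i.choose k : ℝ) * T^i * (1-T)^(n-i) := by
    rw [range_eq_Ico]
    refine (Finset.sum_subset (Finset.Ico_subset_Ico (Nat.zero_le k) le_rfl) ?_).symm
    intro i hi hni
    simp only [mem_Ico, not_and, not_le] at hi hni
    have : i < k := by
      rcases lt_or_ge i k with h | h
      · exact h
      · exact absurd (hni h) (by omega)
    rw [Nat.choose_eq_zero_of_lt this]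
    ring
  rw [h1, Finset.sum_Ico_eq_sum_range]
  have h2 : ∀ u ∈ range (n + 1 - k), (n.choose (k+u) : ℝ) * ((k+u).choose k : ℝ) * T^(k+u) * (1-T)^(n-(k+u))
      = (n.choose k : ℝ) * T^k * (((n-k).choose u : ℝ) * T^u * (1-T)^((n-k)-u)) := by
    intro u hu
    simp only [mem_range] at hu
    have hun : k + u ≤ n := by omega
    have hc : (n.choose (k+u) : ℕ) * ((k+u).choose k) = n.choose k * ((n-k).choose u) := by
      have := Nat.choose_mul (n := n) (Nat.le_add_right k u)
      simpa using this
    have hc' : (n.choose (k+u) : ℝ) * ((k+u).choose k : ℝ) = (n.choose k : ℝ) * ((n-k).choose u : ℝ) := by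
      exact_mod_cast congrArg (Nat.cast (R := ℝ)) hc
    rw [show n - (k+u) = (n-k) - u by omega, pow_add]
    calc (n.choose (k+u) : ℝ) * ((k+u).choose k : ℝ) * (T^k * T^u) * (1-T)^((n-k)-u)
        = ((n.choose (k+u) : ℝ) * ((k+u).choose k : ℝ)) * (T^k * T^u) * (1-T)^((n-k)-u) := by ring
      _ = ((n.choose k : ℝ) * ((n-k).choose u : ℝ)) * (T^k * T^u) * (1-T)^((n-k)-u) := by rw [hc']
      _ = (n.choose k : ℝ) * T^k * (((n-k).choose u : ℝ) * T^u * (1-T)^((n-k)-u)) := by ring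
  rw [Finset.sum_congr rfl h2, ← Finset.mul_sum]
  have h3 : ∑ u ∈ range (n + 1 - k), ((n-k).choose u : ℝ) * T^u * (1-T)^((n-k)-u) = 1 := by
    rw [show n + 1 - k = (n-k) + 1 by omega]
    calc ∑ u ∈ range ((n-k) + 1), ((n-k).choose u : ℝ) * T^u * (1-T)^((n-k)-u)
        = ∑ u ∈ range ((n-k) + 1), T^u * (1-T)^((n-k)-u) * ((n-k).choose u : ℝ) :=
          Finset.sum_congr rfl (fun u _ => by ring)
      _ = (T + (1-T))^(n-k) := (add_pow T (1-T) (n-k)).symm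
      _ = 1 := by norm_num
  rw [h3, mul_one]

lemma binom_transform (n : ℕ) (T : ℝ) (c : ℕ → ℝ) :
    ∑ i ∈ range (n+1), (n.choose i : ℝ) * T^i
        * (∑ k ∈ range (i+1), (i.choose k : ℝ) * (-1:ℝ)^k * c k) * (1-T)^(n-i)
      = ∑ k ∈ range (n+1), (n.choose k : ℝ) * (-1:ℝ)^k * T^k * c k := by
  have hext : ∀ i ∈ range (n+1), (n.choose i : ℝ) * T^i
        * (∑ k ∈ range (i+1), (i.choose k : ℝ) * (-1:ℝ)^k * c k) * (1-T)^(n-i)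
      = ∑ k ∈ range (n+1), (-1:ℝ)^k * c k *
          ((n.choose i : ℝ) * (i.choose k : ℝ) * T^i * (1-T)^(n-i)) := by
    intro i hi
    simp only [mem_range] at hi
    have : ∑ k ∈ range (i+1), (i.choose k : ℝ) * (-1:ℝ)^k * c k
        = ∑ k ∈ range (n+1), (i.choose k : ℝ) * (-1:ℝ)^k * c k := by
      refine Finset.sum_subset (by intro a ha; simp only [mem_range] at *; omega) ?_
      intro k hk hki
      simp only [mem_range] at hk hki
      rw [Nat.choose_eq_zero_of_lt (by omega)]
      ring
    rw [this, Finset.mul_sum, Finset.sum_mul]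
    exact Finset.sum_congr rfl (fun k _ => by ring)
  rw [Finset.sum_congr rfl hext, Finset.sum_comm]
  refine Finset.sum_congr rfl (fun k hk => ?_)
  simp only [mem_range] at hk
  rw [← Finset.mul_sum, inner_binom n k (by omega) T]
  ring

lemma qBernoulliPoly_closed (q : ℝ) (hq : 0 ≤ q) (n : ℕ) (x : ℝ) :
    qBernoulliPoly q n x
      = (1-q)⁻¹ ^ n * ∑ k ∈ range (n+1),
          (n.choose k : ℝ) * (-1:ℝ)^k * q ^ (x * (k:ℝ)) * qc q k := by
  have hT : ∀ i : ℕ, q ^ (x * (i:ℝ)) = (q ^ x) ^ i := by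
    intro i
    rw [Real.rpow_mul hq, Real.rpow_natCast]
  unfold qBernoulliPoly qBernoulli qnum
  calc ∑ i ∈ range (n+1), (n.choose i : ℝ) * q ^ (x * (i:ℝ))
          * ((1 - q)⁻¹ ^ i * ∑ k ∈ range (i+1), (i.choose k : ℝ) * (-1:ℝ)^k * qc q k)
          * ((1 - q^x)/(1-q)) ^ (n-i)
      = ∑ i ∈ range (n+1), (1-q)⁻¹ ^ n * ((n.choose i : ℝ) * (q^x)^i
          * (∑ k ∈ range (i+1), (i.choose k : ℝ) * (-1:ℝ)^k * qc q k) * (1 - q^x)^(n-i)) := by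
        refine Finset.sum_congr rfl (fun i hi => ?_)
        simp only [mem_range] at hi
        rw [hT i, div_eq_mul_inv, mul_pow]
        rw [show (1-q)⁻¹ ^ n = (1-q)⁻¹ ^ i * (1-q)⁻¹ ^ (n-i) by
          rw [← pow_add]; congr 1; omega]
        ring
    _ = (1-q)⁻¹ ^ n * ∑ k ∈ range (n+1),
          (n.choose k : ℝ) * (-1:ℝ)^k * q ^ (x * (k:ℝ)) * qc q k := by
        rw [← Finset.mul_sum, binom_transform n (q^x) (qc q)]
        congr 1
        refine Finset.sum_congr rfl (fun k _ => ?_)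
        rw [hT k]

lemma qc_geom (q : ℝ) (hq0 : 0 < q) (hq1 : q < 1) (m : ℕ) (hm : 1 ≤ m) (k : ℕ) :
    qc (q^m) k * ∑ j ∈ range m, (q^k)^j = (1 - q^m)/(1-q) * qc q k := by
  have hq : q ≠ 1 := ne_of_lt hq1
  have h1q : (1:ℝ) - q ≠ 0 := by intro h; apply hq; linarith
  have hpow : ∀ t : ℕ, 1 ≤ t → q ^ t < 1 := fun t ht => pow_lt_one₀ hq0.le hq1 (by omega)
  cases k with
  | zero =>
    simp only [qc, pow_zero, one_pow, Finset.sum_const, card_range, nsmul_eq_mul, mul_one]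
    rw [Real.log_pow]
    have hlog : Real.log q ≠ 0 := Real.log_ne_zero_of_pos_of_ne_one hq0 hq
    have hm' : (m:ℝ) ≠ 0 := Nat.cast_ne_zero.mpr (by omega)
    field_simp
    ring
  | succ i =>
    have hkm : (1:ℝ) - q^(i+1) ≠ 0 := by
      have := hpow (i+1) (by omega); intro h; nlinarith [pow_nonneg hq0.le (i+1)]
    have hkmm : (1:ℝ) - q^(m*(i+1)) ≠ 0 := by
      have := hpow (m*(i+1)) (Nat.mul_pos (by omega) i.succ_pos); intro h; nlinarith
    have hqm : (1:ℝ) - q^m ≠ 0 := by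
      have := hpow m hm; intro h; nlinarith
    have hgeom : ∑ j ∈ range m, (q^(i+1))^j = ((q^(i+1))^m - 1)/((q^(i+1)) - 1) := by
      refine geom_sum_eq ?_ m
      intro h; exact hkm (by rw [h]; ring)
    simp only [qc, qnum]
    have hcast : ((i:ℝ) + 1) = ((i+1 : ℕ) : ℝ) := by push_cast; ring
    have hrp1 : (q^m : ℝ) ^ ((i:ℝ) + 1) = q ^ (m*(i+1)) := by
      rw [hcast, Real.rpow_natCast, ← pow_mul]
    have hrp2 : (q : ℝ) ^ ((i:ℝ) + 1) = q ^ (i+1) := by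
      rw [hcast, Real.rpow_natCast]
    rw [hgeom, hrp1, hrp2]
    have hpm : ((q^(i+1)) : ℝ)^m = q^(m*(i+1)) := by rw [← pow_mul, mul_comm]
    rw [hpm]
    have hden1 : ((1:ℝ) - q^(m*(i+1))) * (q^(i+1) - 1) ≠ 0 :=
      mul_ne_zero hkmm (fun h => hkm (by linarith))
    have hden2 : ((1:ℝ) - q) * ((1 - q^(i+1))/(1-q)) ≠ 0 :=
      mul_ne_zero h1q (div_ne_zero hkm h1q)
    rw [div_div_eq_mul_div, div_mul_div_comm, div_mul_div_comm, div_eq_div_iff hden1 hden2]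
    field_simp
    ring

lemma qBernoulliPoly_dist (q : ℝ) (hq0 : 0 < q) (hq1 : q < 1) (m : ℕ) (hm : 1 ≤ m)
    (n : ℕ) (x : ℝ) :
    qBernoulliPoly q n x
      = qnum q (m:ℝ) ^ ((n:ℤ)-1)
          * ∑ j ∈ range m, qBernoulliPoly (q^m) n ((x + (j:ℝ))/m) := by
  have hq : q ≠ 1 := ne_of_lt hq1
  have ha : (1:ℝ) - q ≠ 0 := by intro h; apply hq; linarith
  have hqm1 : q ^ m < 1 := pow_lt_one₀ hq0.le hq1 (by omega)
  have hqm0 : (0:ℝ) < q ^ m := pow_pos hq0 m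
  have hb : (1:ℝ) - q^m ≠ 0 := by intro h; nlinarith
  have hm0 : (m:ℝ) ≠ 0 := Nat.cast_ne_zero.mpr (by omega)
  have hrp : ∀ j k : ℕ, ((q:ℝ)^m) ^ (((x + (j:ℝ))/m) * (k:ℝ)) = q ^ (x * (k:ℝ)) * (q^k)^j := by
    intro j k
    rw [← Real.rpow_natCast q m, ← Real.rpow_mul hq0.le]
    have : (m:ℝ) * (((x + (j:ℝ))/m) * (k:ℝ)) = x * (k:ℝ) + ((j*k : ℕ):ℝ) := by
      push_cast; field_simp
    rw [this, Real.rpow_add hq0, Real.rpow_natCast, mul_comm j k, pow_mul]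
  have hsum : ∑ j ∈ range m, qBernoulliPoly (q^m) n ((x + (j:ℝ))/m)
      = (1-q^m)⁻¹ ^ n * ((1 - q^m)/(1-q)
          * ∑ k ∈ range (n+1), (n.choose k : ℝ) * (-1:ℝ)^k * q ^ (x * (k:ℝ)) * qc q k) := by
    calc ∑ j ∈ range m, qBernoulliPoly (q^m) n ((x + (j:ℝ))/m)
        = ∑ j ∈ range m, (1-q^m)⁻¹ ^ n * ∑ k ∈ range (n+1),
            (n.choose k : ℝ) * (-1:ℝ)^k * q ^ (x * (k:ℝ)) * qc (q^m) k * (q^k)^j := by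
          refine Finset.sum_congr rfl (fun j _ => ?_)
          rw [qBernoulliPoly_closed (q^m) hqm0.le n _]
          congr 1
          refine Finset.sum_congr rfl (fun k _ => ?_)
          rw [hrp j k]; ring
      _ = (1-q^m)⁻¹ ^ n * ∑ k ∈ range (n+1),
            ((n.choose k : ℝ) * (-1:ℝ)^k * q ^ (x * (k:ℝ)))
              * (qc (q^m) k * ∑ j ∈ range m, (q^k)^j) := by
          rw [← Finset.mul_sum, Finset.sum_comm]
          congr 1
          refine Finset.sum_congr rfl (fun k _ => ?_)
          simp only [Finset.mul_sum]
          refine Finset.sum_congr rfl (fun j _ => ?_)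
          ring
      _ = (1-q^m)⁻¹ ^ n * ((1 - q^m)/(1-q)
            * ∑ k ∈ range (n+1), (n.choose k : ℝ) * (-1:ℝ)^k * q ^ (x * (k:ℝ)) * qc q k) := by
          congr 1
          rw [Finset.mul_sum]
          refine Finset.sum_congr rfl (fun k _ => ?_)
          rw [qc_geom q hq0 hq1 m hm k]
          ring
  have hba0 : (1 - q^m)/(1-q) ≠ 0 := div_ne_zero hb ha
  have key : qnum q (m:ℝ) ^ ((n:ℤ)-1) * ((1-q^m)⁻¹^n * ((1-q^m)/(1-q))) = (1-q)⁻¹^n := by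
    have hba : qnum q (m:ℝ) = (1-q^m)/(1-q) := by rw [qnum, Real.rpow_natCast]
    rw [hba, show ((n:ℤ)-1) = (n:ℤ) + (-1) by ring, zpow_add₀ hba0, zpow_natCast,
      zpow_neg_one, div_pow]
    field_simp
    rw [← mul_pow, ← mul_pow, one_div, one_div, mul_inv_cancel₀ hb, mul_inv_cancel₀ ha]
  rw [hsum, qBernoulliPoly_closed q hq0.le n x, ← key]
  ring

lemma sum_range_mul_decomp {M : Type*} [AddCommMonoid M] (F : ℕ → M) (m f : ℕ) :
    ∑ a ∈ Finset.range (m*f), F a = ∑ j ∈ Finset.range m, ∑ b ∈ Finset.range f, F (j*f + b) := by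
  induction m with
  | zero => simp
  | succ m ih =>
    rw [Nat.succ_mul, Finset.sum_range_add, ih, Finset.sum_range_succ]


theorem genQBernoulliPoly_distribution {f : ℕ} (hf : 1 ≤ f) (χ : DirichletCharacter ℂ f)
    (hχ : χ.IsPrimitive) (q : ℝ) (hq0 : 0 < q) (hq1 : q < 1) (g : ℕ) (hg : 0 < g)
    (hfg : f ∣ g) (n : ℕ) (x : ℝ) :
    genQBernoulliPoly χ q n x
      = ((qnum q (g : ℝ) : ℝ) : ℂ) ^ ((n : ℤ) - 1) *
          ∑ a ∈ Finset.range g, χ ((a + 1 : ℕ) : ZMod f)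
            * ((qBernoulliPoly (q ^ g) n ((x + ((a : ℝ) + 1)) / g) : ℝ) : ℂ) := by
  obtain ⟨m, hgm⟩ := hfg
  have hm : 1 ≤ m := by
    rcases Nat.eq_zero_or_pos m with h | h
    · subst h; omega
    · omega
  have hf0 : (f:ℝ) ≠ 0 := Nat.cast_ne_zero.mpr (by omega)
  have hm0 : (m:ℝ) ≠ 0 := Nat.cast_ne_zero.mpr (by omega)
  have ha : (1:ℝ) - q ≠ 0 := by intro h; nlinarith
  have hQ0 : (0:ℝ) < q^f := pow_pos hq0 f
  have hQ1 : q^f < 1 := pow_lt_one₀ hq0.le hq1 (by omega)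
  have hbf : (1:ℝ) - q^f ≠ 0 := by intro h; nlinarith
  have hQm : ((q:ℝ)^f)^m = q^g := by rw [← pow_mul, hgm]
  -- scalar identity
  have hscal : qnum q (f:ℝ) * qnum (q^f) (m:ℝ) = qnum q (g:ℝ) := by
    unfold qnum
    rw [Real.rpow_natCast, Real.rpow_natCast, Real.rpow_natCast, hQm]
    field_simp
  -- per-term expansion
  have hterm : ∀ b : ℕ, qBernoulliPoly (q^f) n ((x + ((b:ℝ)+1))/f)
      = qnum (q^f) (m:ℝ) ^ ((n:ℤ)-1)
        * ∑ j ∈ Finset.range m, qBernoulliPoly (q^g) n (((x + ((b:ℝ)+1))/f + (j:ℝ))/m) := by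
    intro b
    rw [qBernoulliPoly_dist (q^f) hQ0 hQ1 m hm n _, hQm]
  unfold genQBernoulliPoly
  rw [show g = m * f by rw [hgm, Nat.mul_comm]]
  rw [sum_range_mul_decomp (fun a => χ ((a + 1 : ℕ) : ZMod f)
      * ((qBernoulliPoly (q ^ (m*f)) n ((x + ((a : ℝ) + 1)) / ((m*f : ℕ) : ℝ)) : ℝ) : ℂ)) m f]
  have hmf : m * f = g := by rw [hgm, Nat.mul_comm]
  calc ((qnum q (f:ℝ) : ℝ) : ℂ) ^ ((n:ℤ)-1) *
        ∑ b ∈ Finset.range f, χ ((b + 1 : ℕ) : ZMod f)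
          * ((qBernoulliPoly (q ^ f) n ((x + ((b : ℝ) + 1)) / f) : ℝ) : ℂ)
      = (((qnum q (f:ℝ) : ℝ) : ℂ) ^ ((n:ℤ)-1) * ((qnum (q^f) (m:ℝ) : ℝ) : ℂ) ^ ((n:ℤ)-1)) *
        ∑ b ∈ Finset.range f, ∑ j ∈ Finset.range m, χ ((b + 1 : ℕ) : ZMod f)
          * ((qBernoulliPoly (q^g) n (((x + ((b:ℝ)+1))/f + (j:ℝ))/m) : ℝ) : ℂ) := by
        rw [mul_assoc]
        congr 1
        rw [Finset.mul_sum]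
        refine Finset.sum_congr rfl (fun b _ => ?_)
        rw [hterm b]
        push_cast
        simp only [Finset.mul_sum]
        refine Finset.sum_congr rfl (fun j _ => ?_)
        ring
    _ = ((qnum q ((m*f : ℕ):ℝ) : ℝ) : ℂ) ^ ((n:ℤ)-1) *
        ∑ j ∈ Finset.range m, ∑ b ∈ Finset.range f,
          χ (((j*f + b) + 1 : ℕ) : ZMod f)
            * ((qBernoulliPoly (q ^ (m*f)) n ((x + (((j*f + b : ℕ) : ℝ) + 1)) / ((m*f : ℕ) : ℝ)) : ℝ) : ℂ) := by
        congr 1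
        · rw [← Complex.ofReal_zpow, ← Complex.ofReal_zpow, ← Complex.ofReal_zpow,
            ← Complex.ofReal_mul, ← mul_zpow, hscal, hmf]
        · rw [Finset.sum_comm]
          refine Finset.sum_congr rfl (fun j _ => ?_)
          refine Finset.sum_congr rfl (fun b _ => ?_)
          rw [hmf]
          have e1 : (((j*f + b) + 1 : ℕ) : ZMod f) = ((b + 1 : ℕ) : ZMod f) := by
            push_cast [ZMod.natCast_self]
            ring
          have e2 : (x + (((j*f + b : ℕ) : ℝ) + 1)) / ((g : ℕ):ℝ)
              = ((x + ((b:ℝ)+1))/f + (j:ℝ))/m := by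
            rw [show ((g:ℕ):ℝ) = (m:ℝ)*(f:ℝ) by rw [← hmf]; push_cast; ring]
            push_cast
            field_simp
            ring
          rw [e1, e2]
end

section
/- (Theorem 2, first part.) For every integer k ≥ 1 and every real x ≥ 0, the series Σ_{n=0}^{∞} q^{n+x} [n+x]_q^{k−1} converges and β_{k,q}(x) = ((q−1)/log q)·(1/(1−q)^k) − k·Σ_{n=0}^{∞} q^{n+x} [n+x]_q^{k−1} (with the convention [0]_q^0 = 1 in the term n = 0, x = 0, k = 1). -/
open scoped BigOperators

/-- Bernstein-type binomial identity. -/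
lemma key_sum (k : ℕ) (t : ℝ) (b : ℕ → ℝ) :
    ∑ j ∈ Finset.range (k + 1), (k.choose j : ℝ) * t ^ j * (1 - t) ^ (k - j) *
      ∑ i ∈ Finset.range (j + 1), (j.choose i : ℝ) * b i
    = ∑ i ∈ Finset.range (k + 1), (k.choose i : ℝ) * b i * t ^ i := by
  have h1 : ∀ j ∈ Finset.range (k + 1),
      (k.choose j : ℝ) * t ^ j * (1 - t) ^ (k - j) *
        ∑ i ∈ Finset.range (j + 1), (j.choose i : ℝ) * b i
      = ∑ i ∈ Finset.range (j + 1),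
          (k.choose j : ℝ) * (j.choose i : ℝ) * t ^ j * (1 - t) ^ (k - j) * b i := by
    intro j _
    rw [Finset.mul_sum]
    exact Finset.sum_congr rfl fun i _ => by ring
  rw [Finset.sum_congr rfl h1]
  have h2 : ∑ j ∈ Finset.range (k + 1), ∑ i ∈ Finset.range (j + 1),
        ((k.choose j : ℝ) * (j.choose i : ℝ) * t ^ j * (1 - t) ^ (k - j) * b i)
      = ∑ i ∈ Finset.range (k + 1), ∑ j ∈ Finset.Ico i (k + 1),
        ((k.choose j : ℝ) * (j.choose i : ℝ) * t ^ j * (1 - t) ^ (k - j) * b i) := by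
    simp_rw [Finset.range_eq_Ico]
    exact (Finset.sum_Ico_Ico_comm 0 (k + 1)
      (fun i j => (k.choose j : ℝ) * (j.choose i : ℝ) * t ^ j * (1 - t) ^ (k - j) * b i)).symm
  rw [h2]
  refine Finset.sum_congr rfl fun i hi => ?_
  have hik : i ≤ k := by simpa [Nat.lt_succ_iff] using hi
  rw [Finset.sum_Ico_eq_sum_range, show k + 1 - i = (k - i) + 1 by omega]
  have h4 : ∀ m ∈ Finset.range (k - i + 1),
      ((k.choose (i + m) : ℝ) * ((i + m).choose i : ℝ) * t ^ (i + m)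
        * (1 - t) ^ (k - (i + m)) * b i)
      = ((k.choose i : ℝ) * b i * t ^ i) *
          (t ^ m * (1 - t) ^ ((k - i) - m) * ((k - i).choose m : ℝ)) := by
    intro m hm
    have hm' : m ≤ k - i := by simpa [Nat.lt_succ_iff] using hm
    have hcc : k.choose (i + m) * ((i + m).choose i) = k.choose i * ((k - i).choose m) := by
      have := Nat.choose_mul (n := k) (show i ≤ i + m by omega)
      simpa using this
    have hcast : (k.choose (i + m) : ℝ) * ((i + m).choose i : ℝ)
        = (k.choose i : ℝ) * ((k - i).choose m : ℝ) := by exact_mod_cast hcc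
    rw [show k - (i + m) = (k - i) - m by omega, pow_add, hcast]
    ring
  rw [Finset.sum_congr rfl h4, ← Finset.mul_sum]
  have h5 : ∑ m ∈ Finset.range (k - i + 1),
      (t ^ m * (1 - t) ^ ((k - i) - m) * ((k - i).choose m : ℝ)) = 1 := by
    rw [← add_pow t (1 - t) (k - i)]
    norm_num
  rw [h5, mul_one]

theorem qBernoulliPoly_eq_series (q : ℝ) (hq0 : 0 < q) (hq1 : q < 1) (k : ℕ) (hk : 1 ≤ k)
    (x : ℝ) (hx : 0 ≤ x) :
    Summable (fun n : ℕ => q ^ ((n : ℝ) + x) * qnum q ((n : ℝ) + x) ^ (k - 1)) ∧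
    qBernoulliPoly q k x
      = (q - 1) / Real.log q * (1 / (1 - q) ^ k)
        - (k : ℝ) * ∑' n : ℕ, q ^ ((n : ℝ) + x) * qnum q ((n : ℝ) + x) ^ (k - 1) := by
  obtain ⟨m, rfl⟩ : ∃ m, k = m + 1 := ⟨k - 1, by omega⟩
  set u : ℝ := q ^ x with hu
  have hune : (0:ℝ) < u := Real.rpow_pos_of_pos hq0 x
  have h1q : (0:ℝ) < 1 - q := by linarith
  have hne : (1:ℝ) - q ≠ 0 := ne_of_gt h1q
  have hrlt : ∀ i : ℕ, q ^ (i + 1) < 1 := fun i =>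
    pow_lt_one₀ hq0.le hq1 (Nat.succ_ne_zero i)
  have hrpos : ∀ i : ℕ, (0:ℝ) < 1 - q ^ (i + 1) := fun i => by
    have := hrlt i; linarith
  set C : ℕ → ℝ := fun i => (1 - q)⁻¹ ^ m * (m.choose i : ℝ) * (-1 : ℝ) ^ i * u ^ (i + 1)
    with hC
  -- pointwise expansion of the summand
  have hA : ∀ n : ℕ, q ^ ((n : ℝ) + x) * qnum q ((n : ℝ) + x) ^ m
      = ∑ i ∈ Finset.range (m + 1), C i * (q ^ (i + 1)) ^ n := by
    intro n
    have hy : q ^ ((n : ℝ) + x) = q ^ n * u := by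
      rw [Real.rpow_add hq0, Real.rpow_natCast]
    have hbin : (1 - q ^ ((n : ℝ) + x)) ^ m
        = ∑ i ∈ Finset.range (m + 1), (-1 : ℝ) ^ i * (q ^ n * u) ^ i * (m.choose i : ℝ) := by
      rw [show (1 : ℝ) - q ^ ((n : ℝ) + x) = (-(q ^ n * u)) + 1 by rw [hy]; ring, add_pow]
      refine Finset.sum_congr rfl fun i _ => ?_
      rw [neg_pow]
      ring
    simp only [qnum]
    rw [div_pow, hbin, div_eq_mul_inv, ← inv_pow, hy, Finset.sum_mul, Finset.mul_sum]
    refine Finset.sum_congr rfl fun i _ => ?_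
    simp only [hC]
    rw [mul_pow]
    ring
  have hsummand : (fun n : ℕ => q ^ ((n : ℝ) + x) * qnum q ((n : ℝ) + x) ^ m)
      = fun n : ℕ => ∑ i ∈ Finset.range (m + 1), C i * (q ^ (i + 1)) ^ n := funext hA
  have hgsum : ∀ i : ℕ, Summable (fun n : ℕ => C i * (q ^ (i + 1)) ^ n) := by
    intro i
    exact (summable_geometric_of_lt_one (by positivity) (hrlt i)).mul_left _
  have hSummable : Summable (fun n : ℕ => q ^ ((n : ℝ) + x) * qnum q ((n : ℝ) + x) ^ m) := by
    rw [hsummand]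
    exact summable_sum fun i _ => hgsum i
  have htsum : ∑' n : ℕ, q ^ ((n : ℝ) + x) * qnum q ((n : ℝ) + x) ^ m
      = ∑ i ∈ Finset.range (m + 1), C i * (1 - q ^ (i + 1))⁻¹ := by
    rw [hsummand, Summable.tsum_finsetSum fun i _ => hgsum i]
    refine Finset.sum_congr rfl fun i _ => ?_
    rw [tsum_mul_left, tsum_geometric_of_lt_one (by positivity) (hrlt i)]
  have hm1 : m + 1 - 1 = m := rfl
  refine ⟨by rw [hm1]; exact hSummable, ?_⟩
  rw [hm1, htsum]
  -- rewrite the polynomial using the key binomial identity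
  have hP : qBernoulliPoly q (m + 1) x
      = (1 - q)⁻¹ ^ (m + 1) *
          ∑ i ∈ Finset.range (m + 1 + 1),
            ((m + 1).choose i : ℝ) * ((-1 : ℝ) ^ i * qc q i) * u ^ i := by
    rw [← key_sum (m + 1) u (fun i => (-1 : ℝ) ^ i * qc q i), Finset.mul_sum]
    simp only [qBernoulliPoly]
    refine Finset.sum_congr rfl fun j hj => ?_
    have hjk : j ≤ m + 1 := by simpa [Nat.lt_succ_iff] using hj
    have hxq : q ^ (x * (j : ℝ)) = u ^ j := by
      rw [Real.rpow_mul hq0.le, Real.rpow_natCast]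
    have hqn : qnum q x ^ (m + 1 - j) = (1 - u) ^ (m + 1 - j) * ((1 - q)⁻¹) ^ (m + 1 - j) := by
      rw [qnum, ← hu, div_pow, div_eq_mul_inv, inv_pow]
    rw [hxq, hqn]
    simp only [qBernoulli]
    have hpow : (1 - q)⁻¹ ^ j * (1 - q)⁻¹ ^ (m + 1 - j) = (1 - q)⁻¹ ^ (m + 1) := by
      rw [← pow_add, Nat.add_sub_cancel' hjk]
    have hinner : ∑ i ∈ Finset.range (j + 1), (j.choose i : ℝ) * (-1 : ℝ) ^ i * qc q i
        = ∑ i ∈ Finset.range (j + 1), (j.choose i : ℝ) * ((-1 : ℝ) ^ i * qc q i) :=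
      Finset.sum_congr rfl fun i _ => by ring
    rw [hinner]
    calc ((m + 1).choose j : ℝ) * u ^ j *
          ((1 - q)⁻¹ ^ j * ∑ i ∈ Finset.range (j + 1), (j.choose i : ℝ) * ((-1:ℝ)^i * qc q i)) *
          ((1 - u) ^ (m + 1 - j) * (1 - q)⁻¹ ^ (m + 1 - j))
        = ((1 - q)⁻¹ ^ j * (1 - q)⁻¹ ^ (m + 1 - j)) *
            (((m + 1).choose j : ℝ) * u ^ j * (1 - u) ^ (m + 1 - j) *
              ∑ i ∈ Finset.range (j + 1), (j.choose i : ℝ) * ((-1:ℝ)^i * qc q i)) := by ring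
      _ = (1 - q)⁻¹ ^ (m + 1) *
            (((m + 1).choose j : ℝ) * u ^ j * (1 - u) ^ (m + 1 - j) *
              ∑ i ∈ Finset.range (j + 1), (j.choose i : ℝ) * ((-1:ℝ)^i * qc q i)) := by
          rw [hpow]
  rw [hP, Finset.sum_range_succ']
  simp only [Nat.choose_zero_right, Nat.cast_one, pow_zero, mul_one, one_mul]
  rw [mul_add, Finset.mul_sum]
  have hqnum_succ : ∀ i : ℕ, qnum q ((i : ℝ) + 1) = (1 - q ^ (i + 1)) / (1 - q) := by
    intro i
    have h : q ^ ((i : ℝ) + 1) = q ^ (i + 1) := by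
      rw [show ((i : ℝ) + 1) = ((i + 1 : ℕ) : ℝ) by push_cast; ring, Real.rpow_natCast]
    rw [qnum, h]
  have hqc : ∀ i : ℕ, qc q (i + 1) = ((i : ℝ) + 1) * (1 - q) * (1 - q ^ (i + 1))⁻¹ := by
    intro i
    have h0 : qc q (i + 1) = ((i : ℝ) + 1) / qnum q ((i : ℝ) + 1) := rfl
    rw [h0, hqnum_succ i, div_div_eq_mul_div, div_eq_mul_inv]
  have hterm : ∀ i ∈ Finset.range (m + 1),
      (1 - q)⁻¹ ^ (m + 1) *
        (((m + 1).choose (i + 1) : ℝ) * ((-1 : ℝ) ^ (i + 1) * qc q (i + 1)) * u ^ (i + 1))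
      = -(((m : ℝ) + 1) * (C i * (1 - q ^ (i + 1))⁻¹)) := by
    intro i _
    have hchoose : ((m + 1).choose (i + 1) : ℝ) * ((i : ℝ) + 1)
        = ((m : ℝ) + 1) * (m.choose i : ℝ) := by
      have h := Nat.add_one_mul_choose_eq m i
      have h3 : ((m : ℝ) + 1) * (m.choose i : ℝ) = ((m + 1).choose (i + 1) : ℝ) * ((i : ℝ) + 1) := by
        exact_mod_cast h
      linarith
    have hpow2 : (1 - q)⁻¹ ^ (m + 1) * (1 - q) = (1 - q)⁻¹ ^ m := by
      rw [pow_succ, mul_assoc, inv_mul_cancel₀ hne, mul_one]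
    rw [hqc i, hC]
    calc (1 - q)⁻¹ ^ (m + 1) *
          (((m + 1).choose (i + 1) : ℝ) *
            ((-1 : ℝ) ^ (i + 1) * (((i : ℝ) + 1) * (1 - q) * (1 - q ^ (i + 1))⁻¹)) * u ^ (i + 1))
        = (((m + 1).choose (i + 1) : ℝ) * ((i : ℝ) + 1)) * ((1 - q)⁻¹ ^ (m + 1) * (1 - q)) *
            ((-1 : ℝ) ^ (i + 1) * u ^ (i + 1) * (1 - q ^ (i + 1))⁻¹) := by ring
      _ = (((m : ℝ) + 1) * (m.choose i : ℝ)) * (1 - q)⁻¹ ^ m *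
            ((-1 : ℝ) ^ (i + 1) * u ^ (i + 1) * (1 - q ^ (i + 1))⁻¹) := by
          rw [hchoose, hpow2]
      _ = -(((m : ℝ) + 1) *
            ((1 - q)⁻¹ ^ m * (m.choose i : ℝ) * (-1 : ℝ) ^ i * u ^ (i + 1) *
              (1 - q ^ (i + 1))⁻¹)) := by ring
  rw [Finset.sum_congr rfl hterm, Finset.sum_neg_distrib, ← Finset.mul_sum]
  have hqc0 : qc q 0 = (q - 1) / Real.log q := rfl
  rw [hqc0, inv_pow]
  push_cast
  ring
end

section
/- For every integer n ≥ 1 and every real x > 0, the q-Hurwitz zeta function satisfies ζ_q(1−n, x) = −β_{n,q}(x)/n; explicitly, Σ_{m=0}^{∞} q^{m+x} [m+x]_q^{n−1} + (1/n)·(1−q)^{1−n}/log q = −β_{n,q}(x)/n. -/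
open scoped BigOperators

/-- `c_{j+1}(q)` in closed form. -/
lemma qc_succ_eq (q : ℝ) (j : ℕ) :
    qc q (j + 1) = ((j : ℝ) + 1) * (1 - q) / (1 - q ^ (j + 1)) := by
  have h : (q : ℝ) ^ (((j : ℝ) + 1)) = q ^ (j + 1) := by
    rw [show ((j : ℝ) + 1) = ((j + 1 : ℕ) : ℝ) by push_cast; ring, Real.rpow_natCast]
  show ((j : ℝ) + 1) / qnum q ((j : ℝ) + 1) = _
  rw [qnum, h, div_div_eq_mul_div]

/-- Vandermonde-type inner identity. -/
lemma qchoose_inner (n l : ℕ) (hl : l ≤ n) (y : ℝ) :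
    ∑ i ∈ Finset.range (n + 1), (n.choose i : ℝ) * (i.choose l : ℝ) * y ^ i * (1 - y) ^ (n - i)
      = (n.choose l : ℝ) * y ^ l := by
  have hsub : Finset.Ico l (n + 1) ⊆ Finset.range (n + 1) := by
    intro i hi; simp only [Finset.mem_Ico] at hi; simp [hi.2]
  rw [← Finset.sum_subset hsub (by
    intro i hi hni
    simp only [Finset.mem_range] at hi
    simp only [Finset.mem_Ico, not_and, not_lt] at hni
    have : i < l := by omega
    rw [Nat.choose_eq_zero_of_lt this]
    simp)]
  rw [Finset.sum_Ico_eq_sum_range]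
  have hrw : ∀ k ∈ Finset.range (n + 1 - l),
      (n.choose (l + k) : ℝ) * ((l + k).choose l : ℝ) * y ^ (l + k) * (1 - y) ^ (n - (l + k))
        = (n.choose l : ℝ) * y ^ l * (((n - l).choose k : ℝ) * y ^ k * (1 - y) ^ (n - l - k)) := by
    intro k hk
    simp only [Finset.mem_range] at hk
    have hkn : l + k ≤ n := by omega
    have hch : (n.choose (l + k) : ℕ) * ((l + k).choose l) = n.choose l * (n - l).choose k := by
      have := Nat.choose_mul (n := n) (Nat.le_add_right l k)
      simpa using this
    have hch' : (n.choose (l + k) : ℝ) * ((l + k).choose l : ℝ)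
        = (n.choose l : ℝ) * ((n - l).choose k : ℝ) := by exact_mod_cast hch
    have hnk : n - (l + k) = n - l - k := by omega
    rw [hnk, hch', pow_add]
    ring
  rw [Finset.sum_congr rfl hrw, ← Finset.mul_sum]
  have hbin : ∑ k ∈ Finset.range (n + 1 - l),
      ((n - l).choose k : ℝ) * y ^ k * (1 - y) ^ (n - l - k) = 1 := by
    have h1 : n + 1 - l = (n - l) + 1 := by omega
    rw [h1]
    have h2 : (y + (1 - y)) = (1 : ℝ) := by ring
    calc ∑ k ∈ Finset.range (n - l + 1), ((n - l).choose k : ℝ) * y ^ k * (1 - y) ^ (n - l - k)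
        = ∑ k ∈ Finset.range (n - l + 1), y ^ k * (1 - y) ^ (n - l - k) * ((n - l).choose k : ℝ) :=
          Finset.sum_congr rfl fun k _ => by ring
      _ = (y + (1 - y)) ^ (n - l) := (add_pow y (1 - y) (n - l)).symm
      _ = 1 := by rw [h2, one_pow]
  rw [hbin, mul_one]

/-- Double-sum key identity. -/
lemma qkey_sum (n : ℕ) (y : ℝ) (c : ℕ → ℝ) :
    ∑ i ∈ Finset.range (n + 1), (n.choose i : ℝ) * y ^ i * (1 - y) ^ (n - i) *
        (∑ l ∈ Finset.range (i + 1), (i.choose l : ℝ) * (-1 : ℝ) ^ l * c l)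
      = ∑ l ∈ Finset.range (n + 1), (n.choose l : ℝ) * (-1 : ℝ) ^ l * y ^ l * c l := by
  have hext : ∀ i ∈ Finset.range (n + 1),
      (n.choose i : ℝ) * y ^ i * (1 - y) ^ (n - i) *
          (∑ l ∈ Finset.range (i + 1), (i.choose l : ℝ) * (-1 : ℝ) ^ l * c l)
        = ∑ l ∈ Finset.range (n + 1),
            (n.choose i : ℝ) * y ^ i * (1 - y) ^ (n - i) *
              ((i.choose l : ℝ) * (-1 : ℝ) ^ l * c l) := by
    intro i hi
    simp only [Finset.mem_range] at hi
    rw [Finset.mul_sum]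
    refine Finset.sum_subset (Finset.range_subset_range.2 (by omega)) ?_
    intro l hl hnl
    simp only [Finset.mem_range, not_lt] at hnl
    rw [Nat.choose_eq_zero_of_lt (show i < l by omega)]
    simp
  rw [Finset.sum_congr rfl hext, Finset.sum_comm]
  refine Finset.sum_congr rfl fun l hl => ?_
  simp only [Finset.mem_range] at hl
  have := qchoose_inner n l (by omega) y
  calc ∑ i ∈ Finset.range (n + 1),
        (n.choose i : ℝ) * y ^ i * (1 - y) ^ (n - i) * ((i.choose l : ℝ) * (-1 : ℝ) ^ l * c l)
      = (∑ i ∈ Finset.range (n + 1),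
          (n.choose i : ℝ) * (i.choose l : ℝ) * y ^ i * (1 - y) ^ (n - i)) *
            ((-1 : ℝ) ^ l * c l) := by
        rw [Finset.sum_mul]; exact Finset.sum_congr rfl fun i _ => by ring
    _ = (n.choose l : ℝ) * (-1 : ℝ) ^ l * y ^ l * c l := by rw [this]; ring

/-- Closed form of the q-Bernoulli polynomial. -/
lemma qBernoulliPoly_eq (q : ℝ) (hq0 : 0 < q) (hq1 : q < 1) (n : ℕ) (x : ℝ) :
    qBernoulliPoly q n x
      = (1 - q)⁻¹ ^ n *
          ∑ l ∈ Finset.range (n + 1),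
            (n.choose l : ℝ) * (-1 : ℝ) ^ l * (q ^ x) ^ l * qc q l := by
  have hq : (1 : ℝ) - q ≠ 0 := by nlinarith
  set y := q ^ x with hy
  have hstep : qBernoulliPoly q n x
      = (1 - q)⁻¹ ^ n * ∑ i ∈ Finset.range (n + 1),
          (n.choose i : ℝ) * y ^ i * (1 - y) ^ (n - i) *
            (∑ l ∈ Finset.range (i + 1), (i.choose l : ℝ) * (-1 : ℝ) ^ l * qc q l) := by
    rw [qBernoulliPoly, Finset.mul_sum]
    refine Finset.sum_congr rfl fun i hi => ?_
    simp only [Finset.mem_range] at hi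
    have h1 : q ^ (x * (i : ℝ)) = y ^ i := by
      rw [Real.rpow_mul hq0.le, Real.rpow_natCast]
    have h2 : qnum q x = (1 - y) / (1 - q) := rfl
    have hpow : (1 - q)⁻¹ ^ i * (1 - q)⁻¹ ^ (n - i) = (1 - q)⁻¹ ^ n := by
      rw [← pow_add]; congr 1; omega
    rw [h1, h2, qBernoulli, div_eq_mul_inv, mul_pow, ← hpow]
    ring
  rw [hstep, qkey_sum n y (qc q)]

theorem qHurwitzZeta_neg_int (q : ℝ) (hq0 : 0 < q) (hq1 : q < 1) (n : ℕ) (hn : 1 ≤ n)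
    (x : ℝ) (hx : 0 < x) :
    Summable (fun m : ℕ => q ^ ((m : ℝ) + x) * qnum q ((m : ℝ) + x) ^ (n - 1)) ∧
    (∑' m : ℕ, q ^ ((m : ℝ) + x) * qnum q ((m : ℝ) + x) ^ (n - 1))
        + (1 / (n : ℝ)) * (1 - q) ^ (1 - (n : ℤ)) / Real.log q
      = -qBernoulliPoly q n x / n := by
  obtain ⟨m, rfl⟩ : ∃ m, n = m + 1 := ⟨n - 1, by omega⟩
  have h1q : (0 : ℝ) < 1 - q := by linarith
  have hq : (1 : ℝ) - q ≠ 0 := ne_of_gt h1q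
  have hlog : Real.log q < 0 := Real.log_neg hq0 hq1
  have hlog' : Real.log q ≠ 0 := ne_of_lt hlog
  set y := q ^ x with hy
  have hy0 : 0 < y := Real.rpow_pos_of_pos hq0 x
  have hr1 : ∀ j : ℕ, q ^ (j + 1) < 1 := fun j =>
    pow_lt_one₀ hq0.le hq1 (Nat.succ_ne_zero j)
  have hrpos : ∀ j : ℕ, (0 : ℝ) < 1 - q ^ (j + 1) := fun j => sub_pos.2 (hr1 j)
  have hm1 : m + 1 - 1 = m := rfl
  -- term expansion
  have hterm : ∀ k : ℕ, q ^ ((k : ℝ) + x) * qnum q ((k : ℝ) + x) ^ (m + 1 - 1)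
      = ∑ j ∈ Finset.range (m + 1),
          ((m.choose j : ℝ) * (-1 : ℝ) ^ j * (1 - q)⁻¹ ^ m * y ^ (j + 1)) * (q ^ (j + 1)) ^ k := by
    intro k
    have h1 : q ^ ((k : ℝ) + x) = q ^ k * y := by
      rw [Real.rpow_add hq0, Real.rpow_natCast]
    have h2 : qnum q ((k : ℝ) + x) = (1 - q ^ k * y) * (1 - q)⁻¹ := by
      rw [qnum, h1, div_eq_mul_inv]
    rw [hm1, h1, h2, mul_pow]
    have h3 : (1 - q ^ k * y) ^ m
        = ∑ j ∈ Finset.range (m + 1), (m.choose j : ℝ) * (-1 : ℝ) ^ j * (q ^ k * y) ^ j := by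
      rw [show (1 : ℝ) - q ^ k * y = -(q ^ k * y) + 1 by ring, add_pow]
      exact Finset.sum_congr rfl fun j _ => by rw [one_pow, neg_pow]; ring
    rw [h3, Finset.sum_mul, Finset.mul_sum]
    refine Finset.sum_congr rfl fun j _ => ?_
    have h4 : (q ^ (j + 1)) ^ k = (q ^ k) ^ (j + 1) := by
      rw [← pow_mul, ← pow_mul, Nat.mul_comm]
    rw [h4]
    ring
  have hsummand : ∀ j ∈ Finset.range (m + 1),
      Summable (fun k : ℕ =>
        ((m.choose j : ℝ) * (-1 : ℝ) ^ j * (1 - q)⁻¹ ^ m * y ^ (j + 1)) * (q ^ (j + 1)) ^ k) :=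
    fun j _ => (summable_geometric_of_lt_one (pow_nonneg hq0.le _) (hr1 j)).mul_left _
  have hS : Summable (fun k : ℕ => q ^ ((k : ℝ) + x) * qnum q ((k : ℝ) + x) ^ (m + 1 - 1)) :=
    (summable_sum hsummand).congr fun k => (hterm k).symm
  refine ⟨hS, ?_⟩
  have htsum : (∑' k : ℕ, q ^ ((k : ℝ) + x) * qnum q ((k : ℝ) + x) ^ (m + 1 - 1))
      = ∑ j ∈ Finset.range (m + 1),
          ((m.choose j : ℝ) * (-1 : ℝ) ^ j * (1 - q)⁻¹ ^ m * y ^ (j + 1)) *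
            (1 - q ^ (j + 1))⁻¹ := by
    rw [tsum_congr hterm, Summable.tsum_finsetSum hsummand]
    exact Finset.sum_congr rfl fun j _ => by
      rw [tsum_mul_left, tsum_geometric_of_lt_one (pow_nonneg hq0.le _) (hr1 j)]
  rw [htsum, qBernoulliPoly_eq q hq0 hq1 (m + 1) x, ← hy]
  conv_rhs => rw [Finset.sum_range_succ']
  -- now a finite algebraic identity
  have hnR : ((m : ℝ) + 1) ≠ 0 := by positivity
  have key : ∀ j ∈ Finset.range (m + 1),
      ((m.choose j : ℝ) * (-1 : ℝ) ^ j * (1 - q)⁻¹ ^ m * y ^ (j + 1)) * (1 - q ^ (j + 1))⁻¹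
        = -(1 / ((m : ℝ) + 1)) *
            ((1 - q)⁻¹ ^ (m + 1) *
              (((m + 1).choose (j + 1) : ℝ) * (-1 : ℝ) ^ (j + 1) * y ^ (j + 1) *
                qc q (j + 1))) := by
    intro j _
    have hch : (((m + 1).choose (j + 1) : ℕ) : ℝ) * ((j : ℝ) + 1)
        = ((m : ℝ) + 1) * (m.choose j : ℝ) := by
      exact_mod_cast (Nat.add_one_mul_choose_eq m j).symm
    have hj1 : ((j : ℝ) + 1) ≠ 0 := by positivity
    have hC : (((m + 1).choose (j + 1) : ℕ) : ℝ)
        = ((m : ℝ) + 1) * (m.choose j : ℝ) / ((j : ℝ) + 1) := by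
      rw [eq_div_iff hj1]; exact hch
    have hrj : (1 : ℝ) - q ^ (j + 1) ≠ 0 := (hrpos j).ne'
    rw [qc_succ_eq, hC]
    field_simp
    linear_combination (-(m.choose j : ℝ) * (1 - q)⁻¹ ^ m * (-1 : ℝ) ^ j) * mul_inv_cancel₀ hq
  rw [Finset.sum_congr rfl key, ← Finset.mul_sum, ← Finset.mul_sum]
  have hzpow : (1 - q) ^ ((1 : ℤ) - ((m + 1 : ℕ) : ℤ)) = (1 - q) * (1 - q)⁻¹ ^ (m + 1) := by
    rw [zpow_sub₀ hq, zpow_one, zpow_natCast, div_eq_mul_inv, inv_pow]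
  have hc0 : qc q 0 = (q - 1) / Real.log q := rfl
  rw [hzpow]
  simp only [hc0, Nat.choose_zero_right, Nat.cast_one, pow_zero, one_mul, mul_one]
  field_simp
  push_cast
  ring_nf
  rw [Finset.sum_congr rfl (fun x _ => by ring : ∀ x ∈ Finset.range (1 + m),
    -(y * y ^ x * (((1 + m).choose (1 + x) : ℕ) : ℝ) * qc q (1 + x) * (-1 : ℝ) ^ x)
      = -((((1 + m).choose (1 + x) : ℕ) : ℝ) * y * y ^ x * qc q (1 + x) * (-1 : ℝ) ^ x))]
  ring
end

section
/- (Eq. (13): Mellin integral representation of the two-variable q-L-series.) For every real x ≥ 0 and every s ∈ ℂ with Re(s) > 0, the integral below converges and Σ_{n=1}^{∞} χ(n) q^{n+x} [n+x]_q^{−s} = (1/Γ(s)) ∫_0^∞ t^{s−1} ( Σ_{n=1}^{∞} χ(n) q^{n+x} e^{−[n+x]_q t} ) dt, where Γ is the complex Gamma function. -/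
open scoped BigOperators

open MeasureTheory Set in
theorem aux_mellin_tsum (c : ℕ → ℂ) (a : ℕ → ℝ) (ha : ∀ n, 1 ≤ a n)
    (r : ℝ) (hr0 : 0 ≤ r) (hr1 : r < 1) (hc : ∀ n, ‖c n‖ ≤ r ^ (n + 1))
    (s : ℂ) (hs : 0 < s.re) :
    IntegrableOn (fun t : ℝ => (t : ℂ) ^ (s - 1) *
        ∑' n : ℕ, c n * Complex.exp (((-(a n) * t : ℝ) : ℂ))) (Set.Ioi 0) ∧
    ∑' n : ℕ, c n * ((a n : ℝ) : ℂ) ^ (-s)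
      = (1 / Complex.Gamma s) * ∫ t in Set.Ioi (0 : ℝ), (t : ℂ) ^ (s - 1) *
          ∑' n : ℕ, c n * Complex.exp (((-(a n) * t : ℝ) : ℂ)) := by
  have ha0 : ∀ n, (0:ℝ) < a n := fun n => zero_lt_one.trans_le (ha n)
  have hG : IntegrableOn (fun t : ℝ => Real.exp (-t) * t ^ (s.re - 1)) (Ioi 0) :=
    Real.GammaIntegral_convergent hs
  set F : ℕ → ℝ → ℂ :=
    fun n t => (t : ℂ) ^ (s - 1) * (c n * Complex.exp (((-(a n) * t : ℝ) : ℂ))) with hF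
  have hFnorm : ∀ n, ∀ t ∈ Ioi (0:ℝ),
      ‖F n t‖ ≤ r ^ (n + 1) * (Real.exp (-t) * t ^ (s.re - 1)) := by
    intro n t ht
    rw [mem_Ioi] at ht
    have h1 : ‖(t : ℂ) ^ (s - 1)‖ = t ^ (s.re - 1) := by
      rw [Complex.norm_cpow_eq_rpow_re_of_pos ht, Complex.sub_re,
        Complex.one_re]
    have h2 : ‖Complex.exp (((-(a n) * t : ℝ) : ℂ))‖ = Real.exp (-(a n) * t) := by
      rw [Complex.norm_exp, Complex.ofReal_re]
    have h3 : Real.exp (-(a n) * t) ≤ Real.exp (-t) := by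
      apply Real.exp_le_exp.mpr
      nlinarith [ha n]
    calc ‖F n t‖ = t ^ (s.re - 1) * (‖c n‖ * Real.exp (-(a n) * t)) := by
          rw [hF]; simp only [norm_mul, h1, h2]
      _ ≤ t ^ (s.re - 1) * (r ^ (n + 1) * Real.exp (-t)) := by
          apply mul_le_mul_of_nonneg_left _ (Real.rpow_nonneg ht.le _)
          exact mul_le_mul (hc n) h3 (Real.exp_pos _).le (by positivity)
      _ = r ^ (n + 1) * (Real.exp (-t) * t ^ (s.re - 1)) := by ring
  have hFm : ∀ n, AEStronglyMeasurable (F n) (volume.restrict (Ioi 0)) := by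
    intro n
    apply AEStronglyMeasurable.mul
    · exact (continuousOn_of_forall_continuousAt (fun t ht =>
        Complex.continuousAt_ofReal_cpow_const _ _
          (Or.inr (ne_of_gt (mem_Ioi.mp ht))))).aestronglyMeasurable measurableSet_Ioi
    · refine Continuous.aestronglyMeasurable ?_
      fun_prop
  have hFi : ∀ n, IntegrableOn (F n) (Ioi 0) := by
    intro n
    apply Integrable.mono (hG.const_mul (r ^ (n + 1))) (hFm n)
    filter_upwards [ae_restrict_mem measurableSet_Ioi] with t ht
    rw [Real.norm_eq_abs]
    exact (hFnorm n t ht).trans (le_abs_self _)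
  have hrs : Summable (fun n : ℕ => r ^ (n + 1)) := by
    simpa [pow_succ] using (summable_geometric_of_lt_one hr0 hr1).mul_right r
  have hsumF : ∀ t ∈ Ioi (0:ℝ), Summable (fun n => F n t) := by
    intro t ht
    exact Summable.of_norm (Summable.of_nonneg_of_le (fun n => norm_nonneg _)
      (fun n => hFnorm n t ht) (hrs.mul_right _))
  have hsumFn : ∀ t ∈ Ioi (0:ℝ), Summable (fun n => ‖F n t‖) := by
    intro t ht
    exact Summable.of_nonneg_of_le (fun n => norm_nonneg _) (fun n => hFnorm n t ht)
      (hrs.mul_right _)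
  set g : ℝ → ℂ := fun t => ∑' n, F n t with hg
  have hgm : AEStronglyMeasurable g (volume.restrict (Ioi 0)) := by
    apply aestronglyMeasurable_of_tendsto_ae (f := fun (m : ℕ) t => ∑ n ∈ Finset.range m, F n t)
      Filter.atTop (fun m => Finset.aestronglyMeasurable_fun_sum _ (fun i _ => hFm i))
    filter_upwards [ae_restrict_mem measurableSet_Ioi] with t ht
    exact (hsumF t ht).hasSum.tendsto_sum_nat
  have hgnorm : ∀ t ∈ Ioi (0:ℝ),
      ‖g t‖ ≤ (∑' n, r ^ (n + 1)) * (Real.exp (-t) * t ^ (s.re - 1)) := by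
    intro t ht
    calc ‖g t‖ ≤ ∑' n, ‖F n t‖ := norm_tsum_le_tsum_norm (hsumFn t ht)
      _ ≤ ∑' n, r ^ (n + 1) * (Real.exp (-t) * t ^ (s.re - 1)) :=
          (hsumFn t ht).tsum_le_tsum (fun n => hFnorm n t ht) (hrs.mul_right _)
      _ = (∑' n, r ^ (n + 1)) * (Real.exp (-t) * t ^ (s.re - 1)) := tsum_mul_right
  have hgi : IntegrableOn g (Ioi 0) := by
    apply Integrable.mono (hG.const_mul (∑' n, r ^ (n + 1))) hgm
    filter_upwards [ae_restrict_mem measurableSet_Ioi] with t ht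
    rw [Real.norm_eq_abs]
    exact (hgnorm t ht).trans (le_abs_self _)
  have hfun : (fun t : ℝ => (t : ℂ) ^ (s - 1) *
      ∑' n : ℕ, c n * Complex.exp (((-(a n) * t : ℝ) : ℂ))) = g :=
    (funext fun t => tsum_mul_left).symm
  rw [hfun]
  refine ⟨hgi, ?_⟩
  -- lintegral condition for integral_tsum
  have hcond : ∑' n, ∫⁻ t in Ioi 0, ‖F n t‖₊ ≠ ⊤ := by
    set K := ∫ t in Ioi (0:ℝ), Real.exp (-t) * t ^ (s.re - 1) with hK
    have hb : ∀ n, ∫⁻ t in Ioi 0, ‖F n t‖₊ ≤ ENNReal.ofReal (r ^ (n + 1) * K) := by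
      intro n
      have step1 : ∫⁻ t in Ioi 0, ‖F n t‖₊ ≤
          ∫⁻ t in Ioi (0:ℝ), ENNReal.ofReal (r ^ (n + 1) * (Real.exp (-t) * t ^ (s.re - 1))) := by
        refine lintegral_mono_ae ?_
        filter_upwards [ae_restrict_mem measurableSet_Ioi] with t ht
        rw [← enorm_eq_nnnorm, ← ofReal_norm]
        exact ENNReal.ofReal_le_ofReal (hFnorm n t ht)
      have step2 : ∫⁻ t in Ioi (0:ℝ),
          ENNReal.ofReal (r ^ (n + 1) * (Real.exp (-t) * t ^ (s.re - 1)))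
            = ENNReal.ofReal (r ^ (n + 1) * K) := by
        rw [← MeasureTheory.ofReal_integral_eq_lintegral_ofReal (hG.const_mul _)]
        · rw [MeasureTheory.integral_const_mul]
        · filter_upwards [ae_restrict_mem measurableSet_Ioi] with t ht
          have : (0:ℝ) < t := ht
          positivity
      rw [← step2]; exact step1
    have hKnn : Summable (fun n : ℕ => r ^ (n + 1) * K) := hrs.mul_right K
    have hK0 : 0 ≤ K := by
      apply setIntegral_nonneg measurableSet_Ioi
      intro t ht
      have : (0:ℝ) < t := ht
      positivity
    refine ne_of_lt ?_
    calc ∑' n, ∫⁻ t in Ioi 0, ‖F n t‖₊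
        ≤ ∑' n, ENNReal.ofReal (r ^ (n + 1) * K) := ENNReal.tsum_le_tsum hb
      _ = ENNReal.ofReal (∑' n, r ^ (n + 1) * K) :=
          (ENNReal.ofReal_tsum_of_nonneg (fun n => by positivity) hKnn).symm
      _ < ⊤ := ENNReal.ofReal_lt_top
  have hswap : ∫ t in Ioi (0:ℝ), g t = ∑' n, ∫ t in Ioi (0:ℝ), F n t :=
    integral_tsum hFm hcond
  have hval : ∀ n, ∫ t in Ioi (0:ℝ), F n t
      = Complex.Gamma s * (c n * ((a n : ℝ) : ℂ) ^ (-s)) := by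
    intro n
    have h1 : ∀ t : ℝ, F n t = c n * ((t : ℂ) ^ (s - 1) *
        Complex.exp (-((a n : ℝ) * t : ℂ))) := by
      intro t
      rw [hF]
      push_cast
      ring_nf
    simp_rw [h1]
    rw [MeasureTheory.integral_const_mul, Complex.integral_cpow_mul_exp_neg_mul_Ioi hs (ha0 n)]
    have harg : ((a n : ℝ) : ℂ).arg ≠ Real.pi := by
      rw [Complex.arg_ofReal_of_nonneg (ha0 n).le]
      exact Real.pi_ne_zero.symm
    have h2 : ((1 : ℂ) / (a n : ℝ)) ^ s = ((a n : ℝ) : ℂ) ^ (-s) := by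
      rw [one_div, Complex.inv_cpow _ _ harg, ← Complex.cpow_neg]
    rw [h2]; ring
  rw [hswap]
  have : ∑' n, ∫ t in Ioi (0:ℝ), F n t
      = Complex.Gamma s * ∑' n, c n * ((a n : ℝ) : ℂ) ^ (-s) := by
    rw [tsum_congr hval, tsum_mul_left]
  rw [this, one_div, ← mul_assoc, inv_mul_cancel₀ (Complex.Gamma_ne_zero_of_re_pos hs), one_mul]

open MeasureTheory in
theorem twoVariable_qL_mellin {f : ℕ} (hf : 1 ≤ f) (χ : DirichletCharacter ℂ f)
    (hχ : χ.IsPrimitive) (q : ℝ) (hq0 : 0 < q) (hq1 : q < 1) (x : ℝ) (hx : 0 ≤ x)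
    (s : ℂ) (hs : 0 < s.re) :
    IntegrableOn (fun t : ℝ => (t : ℂ) ^ (s - 1) *
        ∑' n : ℕ, χ ((n + 1 : ℕ) : ZMod f) * ((q ^ (((n : ℝ) + 1) + x) : ℝ) : ℂ)
          * Complex.exp (((-(qnum q (((n : ℝ) + 1) + x)) * t : ℝ) : ℂ))) (Set.Ioi 0) ∧
    ∑' n : ℕ, χ ((n + 1 : ℕ) : ZMod f) * ((q ^ (((n : ℝ) + 1) + x) : ℝ) : ℂ)
        * ((qnum q (((n : ℝ) + 1) + x) : ℝ) : ℂ) ^ (-s)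
      = (1 / Complex.Gamma s) * ∫ t in Set.Ioi (0 : ℝ), (t : ℂ) ^ (s - 1) *
          ∑' n : ℕ, χ ((n + 1 : ℕ) : ZMod f) * ((q ^ (((n : ℝ) + 1) + x) : ℝ) : ℂ)
            * Complex.exp (((-(qnum q (((n : ℝ) + 1) + x)) * t : ℝ) : ℂ)) := by
  have ha : ∀ n : ℕ, 1 ≤ qnum q (((n : ℝ) + 1) + x) := by
    intro n
    have hq1' : (0:ℝ) < 1 - q := by linarith
    have h1 : (1:ℝ) ≤ ((n : ℝ) + 1) + x := by
      have := Nat.cast_nonneg (α := ℝ) n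
      linarith
    have he : q ^ (((n : ℝ) + 1) + x) ≤ q := by
      have := Real.rpow_le_rpow_of_exponent_ge hq0 hq1.le h1
      simpa using this
    rw [qnum, le_div_iff₀ hq1']
    linarith
  have hc : ∀ n : ℕ, ‖χ ((n + 1 : ℕ) : ZMod f) * ((q ^ (((n : ℝ) + 1) + x) : ℝ) : ℂ)‖
      ≤ q ^ (n + 1) := by
    intro n
    have h1 : ‖χ ((n + 1 : ℕ) : ZMod f)‖ ≤ 1 := χ.norm_le_one _
    have h2 : q ^ (((n : ℝ) + 1) + x) ≤ q ^ (((n : ℝ) + 1)) :=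
      Real.rpow_le_rpow_of_exponent_ge hq0 hq1.le (by linarith)
    have h3 : q ^ (((n : ℝ) + 1)) = q ^ (n + 1) := by
      rw [show ((n : ℝ) + 1) = ((n + 1 : ℕ) : ℝ) by push_cast; ring, Real.rpow_natCast]
    calc ‖χ ((n + 1 : ℕ) : ZMod f) * ((q ^ (((n : ℝ) + 1) + x) : ℝ) : ℂ)‖
        = ‖χ ((n + 1 : ℕ) : ZMod f)‖ * ‖((q ^ (((n : ℝ) + 1) + x) : ℝ) : ℂ)‖ := norm_mul _ _
      _ ≤ 1 * q ^ (n + 1) := by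
          apply mul_le_mul h1 ?_ (norm_nonneg _) zero_le_one
          rw [Complex.norm_real, Real.norm_of_nonneg (Real.rpow_nonneg hq0.le _), ← h3]
          exact h2
      _ = q ^ (n + 1) := one_mul _
  have := aux_mellin_tsum
    (fun n => χ ((n + 1 : ℕ) : ZMod f) * ((q ^ (((n : ℝ) + 1) + x) : ℝ) : ℂ))
    (fun n => qnum q (((n : ℝ) + 1) + x)) ha q hq0.le hq1 hc s hs
  exact ⟨this.1, by simpa [mul_assoc] using this.2⟩
end

section
/- (Eq. (14).) For all integers a, F with 0 < a < F and every s ∈ ℂ with s ≠ 1, the partial q-zeta function satisfies H_q(s, a, F) = [F]_q^{−s} · ζ_{q^F}(s, a/F). -/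
open scoped BigOperators

/-- The q-Hurwitz zeta function
`ζ_q(s,x) = ∑_{n=0}^∞ q^{n+x}/[n+x]_q^s − (1/(s−1))·(1−q)^s/log q`. -/
noncomputable def qHurwitzZeta (q : ℝ) (s : ℂ) (x : ℝ) : ℂ :=
  (∑' n : ℕ, ((q ^ ((n : ℝ) + x) : ℝ) : ℂ) / ((qnum q ((n : ℝ) + x) : ℝ) : ℂ) ^ s)
    - (1 / (s - 1)) * ((1 - q : ℝ) : ℂ) ^ s / ((Real.log q : ℝ) : ℂ)

/-- The partial q-zeta function
`H_q(s,a,F) = ∑_{n=0}^∞ q^{a+nF}/[a+nF]_q^s + (1/F)·(1−q)^s/((1−s) log q)`. -/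
noncomputable def qPartialZeta (q : ℝ) (s : ℂ) (a F : ℕ) : ℂ :=
  (∑' n : ℕ, ((q ^ ((a : ℝ) + (n : ℝ) * F) : ℝ) : ℂ)
      / ((qnum q ((a : ℝ) + (n : ℝ) * F) : ℝ) : ℂ) ^ s)
    + (1 / (F : ℂ)) * ((1 - q : ℝ) : ℂ) ^ s / ((1 - s) * ((Real.log q : ℝ) : ℂ))

theorem qPartialZeta_eq_qHurwitzZeta (q : ℝ) (hq0 : 0 < q) (hq1 : q < 1) (a F : ℕ)
    (ha : 0 < a) (haF : a < F) (s : ℂ) (hs : s ≠ 1) :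
    qPartialZeta q s a F
      = ((qnum q (F : ℝ) : ℝ) : ℂ) ^ (-s) * qHurwitzZeta (q ^ F) s ((a : ℝ) / F) := by
  have hF : 0 < F := ha.trans haF
  have hFR : (0:ℝ) < F := Nat.cast_pos.mpr hF
  have haR : (0:ℝ) < a := Nat.cast_pos.mpr ha
  have h1q : (0:ℝ) < 1 - q := by linarith
  have hqF0 : (0:ℝ) < q ^ F := pow_pos hq0 F
  have hqF1 : q ^ F < 1 := pow_lt_one₀ hq0.le hq1 hF.ne'
  have h1qF : (0:ℝ) < 1 - q ^ F := by linarith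
  have hrw : q ^ ((F:ℝ)) = q ^ F := Real.rpow_natCast q F
  have hqnumF : qnum q (F:ℝ) = (1 - q ^ F)/(1 - q) := by rw [qnum, hrw]
  have hA : (0:ℝ) < qnum q (F:ℝ) := by rw [hqnumF]; positivity
  have hAs : ((qnum q (F:ℝ) : ℝ) : ℂ) ^ s ≠ 0 := by
    intro h
    rcases (Complex.cpow_eq_zero_iff _ s).mp h with ⟨h1, _⟩
    exact hA.ne' (by exact_mod_cast h1)
  have hlogq : Real.log q ≠ 0 := (Real.log_neg hq0 hq1).ne
  have hs1 : s - 1 ≠ 0 := sub_ne_zero.mpr hs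
  have hs1' : 1 - s ≠ 0 := sub_ne_zero.mpr (Ne.symm hs)
  rw [qPartialZeta, qHurwitzZeta, mul_sub, ← tsum_mul_left]
  have hterm : ∀ n : ℕ,
      ((qnum q (F : ℝ) : ℝ) : ℂ) ^ (-s) *
        ((((q ^ F) ^ ((n : ℝ) + (a:ℝ)/F) : ℝ) : ℂ)
          / ((qnum (q ^ F) ((n : ℝ) + (a:ℝ)/F) : ℝ) : ℂ) ^ s)
      = ((q ^ ((a : ℝ) + (n : ℝ) * F) : ℝ) : ℂ)
          / ((qnum q ((a : ℝ) + (n : ℝ) * F) : ℝ) : ℂ) ^ s := by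
    intro n
    set x : ℝ := (n : ℝ) + (a:ℝ)/F with hx
    set w : ℝ := (a : ℝ) + (n : ℝ) * F with hw
    have hwpos : 0 < w := by
      have h0 : (0:ℝ) ≤ (n:ℝ) * F := by positivity
      rw [hw]; linarith
    have hE : (q ^ F : ℝ) ^ x = q ^ w := by
      rw [← Real.rpow_natCast q F, ← Real.rpow_mul hq0.le]
      congr 1
      rw [hx, hw, mul_add, mul_div_assoc', mul_div_cancel_left₀ _ hFR.ne']
      ring
    have hqw1 : q ^ w < 1 := Real.rpow_lt_one hq0.le hq1 hwpos
    have hqw0 : (0:ℝ) < q ^ w := Real.rpow_pos_of_pos hq0 w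
    have hQ : qnum (q ^ F) x = (1 - q ^ w) / (1 - q ^ F) := by rw [qnum, hE]
    have hB : (0:ℝ) < qnum (q ^ F) x := by rw [hQ]; exact div_pos (by linarith) h1qF
    have hBs : ((qnum (q ^ F) x : ℝ) : ℂ) ^ s ≠ 0 := by
      intro h
      rcases (Complex.cpow_eq_zero_iff _ s).mp h with ⟨h1, _⟩
      exact hB.ne' (by exact_mod_cast h1)
    have hmul : qnum q w = qnum q (F:ℝ) * qnum (q ^ F) x := by
      rw [qnum, hqnumF, hQ]
      field_simp
    have hsplit : ((qnum q w : ℝ) : ℂ) ^ s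
        = ((qnum q (F:ℝ) : ℝ) : ℂ) ^ s * ((qnum (q ^ F) x : ℝ) : ℂ) ^ s := by
      rw [hmul, Complex.ofReal_mul, Complex.mul_cpow_ofReal_nonneg hA.le hB.le]
    rw [hE, hsplit, Complex.cpow_neg]
    field_simp
  rw [tsum_congr hterm]
  have hconst : ((qnum q (F : ℝ) : ℝ) : ℂ) ^ (-s) *
      (1 / (s - 1) * ((1 - q ^ F : ℝ) : ℂ) ^ s / ((Real.log (q ^ F) : ℝ) : ℂ))
      = - (1 / (F : ℂ) * ((1 - q : ℝ) : ℂ) ^ s / ((1 - s) * ((Real.log q : ℝ) : ℂ))) := by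
    have h1 : (1 - q ^ F : ℝ) = qnum q (F:ℝ) * (1 - q) := by
      rw [hqnumF]; field_simp
    have h2 : ((1 - q ^ F : ℝ) : ℂ) ^ s
        = ((qnum q (F:ℝ) : ℝ) : ℂ) ^ s * ((1 - q : ℝ) : ℂ) ^ s := by
      rw [h1, Complex.ofReal_mul, Complex.mul_cpow_ofReal_nonneg hA.le h1q.le]
    have h3 : Real.log (q ^ F) = (F:ℝ) * Real.log q := by rw [Real.log_pow]
    rw [h2, h3, Complex.cpow_neg]
    push_cast
    have hFne : ((F:ℕ) : ℂ) ≠ 0 := Nat.cast_ne_zero.mpr hF.ne'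
    have hlog : ((Real.log q : ℝ) : ℂ) ≠ 0 := by exact_mod_cast hlogq
    field_simp
    ring
  rw [hconst]
  ring
end

section
/- For every integer k ≥ 0, the q-Bernoulli number β_{k,q} tends to the ordinary Bernoulli number B_k as q → 1 from the left; that is, lim_{q→1⁻} β_{k,q} = B_k, where B_k is the k-th Bernoulli number with the convention B_1 = −1/2. -/
open scoped BigOperators

open Filter Asymptotics Finset

noncomputable def bcoef : ℕ → ℝ := fun j => ((bernoulli j : ℚ) : ℝ) / (Nat.factorial j)

lemma bcoef_even_le (m : ℕ) (hm : m ≠ 0) :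
    |((bernoulli (2*m) : ℚ) : ℝ)| / (Nat.factorial (2*m)) ≤ 2 := by
  have hz := hasSum_zeta_nat hm
  have hz2 := hasSum_zeta_two
  have hnn : (0:ℝ) ≤ ∑' n : ℕ, 1 / (n:ℝ) ^ (2*m) :=
    tsum_nonneg fun n => by positivity
  have hle : (∑' n : ℕ, 1 / (n:ℝ) ^ (2*m)) ≤ Real.pi ^ 2 / 6 := by
    rw [← hz2.tsum_eq]
    refine Summable.tsum_le_tsum (fun n => ?_) hz.summable hz2.summable
    rcases Nat.eq_zero_or_pos n with h | h
    · subst h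
      rw [Nat.cast_zero, zero_pow (by omega : 2*m ≠ 0), zero_pow (by norm_num : (2:ℕ) ≠ 0)]
    · apply one_div_le_one_div_of_le
      · positivity
      · exact pow_le_pow_right₀ (by exact_mod_cast h) (by omega)
  have hpi : Real.pi ^ 2 / 6 ≤ 2 := by
    nlinarith [Real.pi_lt_d2, Real.pi_pos]
  have hval := hz.tsum_eq
  set T : ℝ := ∑' n : ℕ, 1 / (n:ℝ) ^ (2*m) with hT
  set C : ℝ := 2 ^ (2*m-1) * Real.pi ^ (2*m) with hC
  have hC1 : (1:ℝ) ≤ C := by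
    have h1 : (1:ℝ) ≤ 2 ^ (2*m-1) := one_le_pow₀ (by norm_num)
    have h2 : (1:ℝ) ≤ Real.pi ^ (2*m) := one_le_pow₀ (by nlinarith [Real.pi_gt_three])
    nlinarith
  have habs : |((bernoulli (2*m) : ℚ) : ℝ)| / (Nat.factorial (2*m)) * C = T := by
    have h2 : |T| = C * |((bernoulli (2*m) : ℚ) : ℝ)| / (Nat.factorial (2*m)) := by
      rw [hval]
      simp only [abs_div, abs_mul, abs_pow, abs_neg, abs_one, one_pow, one_mul, abs_two,
        Nat.abs_cast, abs_of_nonneg Real.pi_pos.le]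
      rw [hC]
    rw [abs_of_nonneg hnn] at h2
    rw [h2]; ring
  have hTle : T ≤ 2 := le_trans hle hpi
  nlinarith [abs_nonneg (((bernoulli (2*m) : ℚ) : ℝ)),
    div_nonneg (abs_nonneg (((bernoulli (2*m) : ℚ) : ℝ))) (le_of_lt (by positivity : (0:ℝ) < ((2*m).factorial : ℝ)))]

lemma bcoef_abs_le (j : ℕ) : |bcoef j| ≤ 4 := by
  unfold bcoef
  rcases Nat.even_or_odd j with he | ho
  · rcases Nat.eq_zero_or_pos j with h | h
    · subst h; norm_num
    · obtain ⟨m, hm⟩ := he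
      have hm0 : m ≠ 0 := by omega
      have h2 := bcoef_even_le m hm0
      rw [abs_div, abs_of_nonneg (by positivity : (0:ℝ) ≤ (j.factorial : ℝ)),
        (by omega : j = 2*m)]
      linarith
  · rcases Nat.lt_or_ge j 2 with h | h
    · have : j = 1 := by
        rcases ho with ⟨c, hc⟩; omega
      subst this
      rw [bernoulli_one]
      rw [show ((((-1:ℚ)/2 : ℚ)):ℝ) / (Nat.factorial 1 : ℝ) = -(1/2) by norm_num]
      rw [abs_neg]
      rw [abs_of_nonneg (by norm_num : (0:ℝ) ≤ 1/2)]
      norm_num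
    · have hj : bernoulli j = 0 := by
        have h1 : bernoulli' j = 0 := bernoulli'_eq_zero_of_odd ho (by omega)
        simp [bernoulli, h1]
      simp [hj]

noncomputable def bser : FormalMultilinearSeries ℝ ℝ ℝ :=
  FormalMultilinearSeries.ofScalars ℝ bcoef

noncomputable def Psi : ℝ → ℝ := bser.sum

lemma bser_radius : (1 : ENNReal) ≤ bser.radius := by
  have := bser.le_radius_of_bound 4 (r := 1) (fun n => by
    rw [bser, FormalMultilinearSeries.ofScalars_norm]
    simpa using bcoef_abs_le n)
  simpa using this

lemma hPsi : HasFPowerSeriesOnBall Psi bser 0 1 :=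
  (bser.hasFPowerSeriesOnBall (lt_of_lt_of_le one_pos bser_radius)).mono one_pos bser_radius

lemma Psi_eq_tsum (y : ℝ) : Psi y = ∑' j, bcoef j * y ^ j := by
  unfold Psi FormalMultilinearSeries.sum
  congr 1
  ext j
  rw [bser, FormalMultilinearSeries.ofScalars_apply_eq, smul_eq_mul]

lemma Psi_zero : Psi 0 = 1 := by
  rw [Psi_eq_tsum, tsum_eq_single 0 (fun j hj => by simp [zero_pow hj])]
  simp [bcoef]

lemma qcoef (n : ℕ) :
    (∑ p ∈ Finset.HasAntidiagonal.antidiagonal n,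
      (bernoulli p.1 / (p.1.factorial : ℚ)) * (if p.2 = 0 then 0 else (1:ℚ)/(p.2.factorial : ℚ)))
      = if n = 1 then 1 else 0 := by
  have h := congrArg (PowerSeries.coeff n) (bernoulliPowerSeries_mul_exp_sub_one ℚ)
  rw [PowerSeries.coeff_mul, PowerSeries.coeff_X] at h
  rw [← h]
  refine Finset.sum_congr rfl fun p hp => ?_
  rw [bernoulliPowerSeries, PowerSeries.coeff_mk, map_sub, PowerSeries.coeff_exp,
    PowerSeries.coeff_one]
  simp only [Algebra.algebraMap_self, RingHom.id_apply]
  congr 1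
  rcases Nat.eq_zero_or_pos p.2 with h2 | h2
  · simp [h2, Nat.factorial]
  · simp [Nat.pos_iff_ne_zero.mp h2]

noncomputable def ebcoef : ℕ → ℝ := fun j => if j = 0 then 0 else 1 / (Nat.factorial j : ℝ)

lemma rcoef (n : ℕ) :
    (∑ p ∈ Finset.HasAntidiagonal.antidiagonal n, bcoef p.1 * ebcoef p.2) = if n = 1 then 1 else 0 := by
  have h := qcoef n
  rw [show (if n = 1 then (1:ℝ) else 0) = (((if n = 1 then 1 else 0 : ℚ)) : ℝ) by
    split <;> norm_num, ← h, Rat.cast_sum]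
  refine Finset.sum_congr rfl fun p hp => ?_
  unfold bcoef ebcoef
  rcases Nat.eq_zero_or_pos p.2 with h3 | h3
  · simp [h3]
  · have h4 := Nat.pos_iff_ne_zero.mp h3
    simp only [h4, if_neg, if_false]
    push_cast
    ring

lemma summable_bc {y : ℝ} (hy : |y| < 1) : Summable (fun j => ‖bcoef j * y^j‖) := by
  refine Summable.of_nonneg_of_le (fun j => norm_nonneg _) (fun j => ?_)
    ((summable_geometric_of_lt_one (abs_nonneg y) hy).mul_left 4)
  rw [norm_mul, norm_pow]
  gcongr
  · exact bcoef_abs_le j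
  · exact (Real.norm_eq_abs y).le

lemma summable_eb (y : ℝ) : Summable (fun j => ‖ebcoef j * y^j‖) := by
  refine Summable.of_nonneg_of_le (fun j => norm_nonneg _) (fun j => ?_)
    (Real.summable_pow_div_factorial |y|)
  rw [norm_mul, norm_pow]
  unfold ebcoef
  rcases Nat.eq_zero_or_pos j with h | h
  · simp [h]
  · rw [if_neg (Nat.pos_iff_ne_zero.mp h)]
    rw [Real.norm_eq_abs, Real.norm_eq_abs, abs_of_nonneg (by positivity : (0:ℝ) ≤ 1/(j.factorial:ℝ))]
    rw [div_mul_eq_mul_div, one_mul]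

lemma exp_hasSum (y : ℝ) : HasSum (fun j => ebcoef j * y^j) (Real.exp y - 1) := by
  have h : HasSum (fun j => y^j / (Nat.factorial j : ℝ)) (Real.exp y) := by
    rw [Real.exp_eq_exp_ℝ]
    exact NormedSpace.expSeries_div_hasSum_exp y
  have h2 := h.update 0 0
  have he : Function.update (fun j => y^j / (Nat.factorial j : ℝ)) 0 0
      = fun j => ebcoef j * y^j := by
    funext j
    rcases Nat.eq_zero_or_pos j with hj | hj
    · subst hj; simp [ebcoef]
    · rw [Function.update_of_ne (Nat.pos_iff_ne_zero.mp hj), ebcoef,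
        if_neg (Nat.pos_iff_ne_zero.mp hj)]
      ring
  rw [he] at h2
  convert h2 using 1
  · rfl
  simp [Nat.factorial]
  ring

lemma Psi_mul {y : ℝ} (hy : |y| < 1) : Psi y * (Real.exp y - 1) = y := by
  rw [Psi_eq_tsum, ← (exp_hasSum y).tsum_eq,
    tsum_mul_tsum_eq_tsum_sum_antidiagonal_of_summable_norm (summable_bc hy) (summable_eb y)]
  have key : ∀ n : ℕ, (∑ p ∈ Finset.HasAntidiagonal.antidiagonal n, (bcoef p.1 * y^p.1) * (ebcoef p.2 * y^p.2))
      = (if n = 1 then 1 else 0) * y^n := by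
    intro n
    rw [← rcoef n, Finset.sum_mul]
    refine Finset.sum_congr rfl fun p hp => ?_
    rw [show bcoef p.1 * y ^ p.1 * (ebcoef p.2 * y ^ p.2)
        = bcoef p.1 * ebcoef p.2 * (y ^ p.1 * y ^ p.2) by ring, ← pow_add,
      (Finset.HasAntidiagonal.mem_antidiagonal.mp hp)]
  simp_rw [key]
  rw [tsum_eq_single 1 (fun n hn => by simp [hn])]
  simp

noncomputable def Dd (k j : ℕ) : ℝ :=
  ∑ i ∈ Finset.range (k+1), (-1:ℝ)^i * (k.choose i : ℝ) * (i:ℝ)^j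

lemma Dd_succ (k j : ℕ) :
    Dd (k+1) j = - ∑ m ∈ Finset.range j, (j.choose m : ℝ) * Dd k m := by
  have hh : ∀ i : ℕ, (-1:ℝ)^i * (k.choose i : ℝ) * (i:ℝ)^j
      = (fun i : ℕ => (-1:ℝ)^i * (k.choose i : ℝ) * (i:ℝ)^j) i := fun i => rfl
  have hS2 : ∑ i ∈ Finset.range (k+1), (-1:ℝ)^(i+1) * (k.choose (i+1) : ℝ) * ((i:ℝ)+1)^j
      = Dd k j - (0:ℝ)^j := by
    have h := Finset.sum_range_succ' (fun i : ℕ => (-1:ℝ)^i * (k.choose i : ℝ) * (i:ℝ)^j) (k+1)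
    have h2 : ∑ i ∈ Finset.range (k+1+1), (-1:ℝ)^i * (k.choose i : ℝ) * (i:ℝ)^j = Dd k j := by
      rw [Finset.sum_range_succ, Nat.choose_succ_self]
      simp [Dd]
    rw [h2] at h
    have h3 : ∑ i ∈ Finset.range (k+1), (-1:ℝ)^(i+1) * (k.choose (i+1) : ℝ) * ((i:ℝ)+1)^j
        = ∑ i ∈ Finset.range (k+1), (-1:ℝ)^(i+1) * (k.choose (i+1) : ℝ) * (((i+1:ℕ)):ℝ)^j := by
      refine Finset.sum_congr rfl fun i _ => by push_cast; ring
    rw [h3]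
    simp only [Nat.choose_zero_right, Nat.cast_one, pow_zero, one_mul, Nat.cast_zero] at h
    linarith [h]
  have hS1 : ∑ i ∈ Finset.range (k+1), (-1:ℝ)^i * (k.choose i : ℝ) * ((i:ℝ)+1)^j
      = ∑ m ∈ Finset.range (j+1), (j.choose m : ℝ) * Dd k m := by
    have hT : ∀ i : ℕ, ((i:ℝ)+1)^j = ∑ m ∈ Finset.range (j+1), (j.choose m : ℝ) * (i:ℝ)^m := by
      intro i
      rw [add_pow]
      exact Finset.sum_congr rfl fun m hm => by ring
    calc ∑ i ∈ Finset.range (k+1), (-1:ℝ)^i * (k.choose i : ℝ) * ((i:ℝ)+1)^j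
        = ∑ i ∈ Finset.range (k+1), ∑ m ∈ Finset.range (j+1),
            (j.choose m : ℝ) * ((-1:ℝ)^i * (k.choose i : ℝ) * (i:ℝ)^m) := by
          refine Finset.sum_congr rfl fun i _ => ?_
          rw [hT i, Finset.mul_sum]
          exact Finset.sum_congr rfl fun m _ => by ring
      _ = ∑ m ∈ Finset.range (j+1), (j.choose m : ℝ) * Dd k m := by
          rw [Finset.sum_comm]
          exact Finset.sum_congr rfl fun m _ => by rw [Dd, Finset.mul_sum]
  have main : Dd (k+1) j
      = (∑ i ∈ Finset.range (k+1), ((-1:ℝ)^(i+1) * (k.choose (i+1) : ℝ) * ((i:ℝ)+1)^j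
          + (-((-1:ℝ)^i * (k.choose i : ℝ) * ((i:ℝ)+1)^j)))) + (0:ℝ)^j := by
    rw [Dd, Finset.sum_range_succ']
    simp only [Nat.choose_zero_right, Nat.cast_one, pow_zero, one_mul, Nat.cast_zero]
    congr 1
    refine Finset.sum_congr rfl fun i _ => ?_
    rw [Nat.choose_succ_succ]
    push_cast
    ring
  rw [main, Finset.sum_add_distrib, hS2]
  have h4 : ∑ x ∈ Finset.range (k+1), -((-1:ℝ)^x * (k.choose x : ℝ) * ((x:ℝ)+1)^j)
      = -∑ m ∈ Finset.range (j+1), (j.choose m : ℝ) * Dd k m := by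
    rw [← hS1, Finset.sum_neg_distrib]
  rw [h4, Finset.sum_range_succ, Nat.choose_self, Nat.cast_one, one_mul]
  ring

lemma Dd_eq_zero {k j : ℕ} (h : j < k) : Dd k j = 0 := by
  induction k generalizing j with
  | zero => omega
  | succ k ih =>
    rw [Dd_succ, Finset.sum_eq_zero, neg_zero]
    intro m hm
    rw [ih (by simp at hm; omega), mul_zero]

lemma Dd_self (k : ℕ) : Dd k k = (-1:ℝ)^k * (k.factorial : ℝ) := by
  induction k with
  | zero => simp [Dd]
  | succ k ih =>
    rw [Dd_succ, Finset.sum_range_succ, Finset.sum_eq_zero fun m hm => by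
      rw [Dd_eq_zero (by simp at hm; omega), mul_zero]]
    rw [ih, Nat.choose_succ_self_right]
    push_cast [Nat.factorial_succ]
    ring

lemma partialSum_eq (n : ℕ) (y : ℝ) :
    bser.partialSum n y = ∑ j ∈ Finset.range n, bcoef j * y^j := by
  unfold FormalMultilinearSeries.partialSum
  exact Finset.sum_congr rfl fun j _ => by
    rw [bser, FormalMultilinearSeries.ofScalars_apply_eq, smul_eq_mul]

lemma core_limit (k : ℕ) :
    Tendsto (fun s : ℝ =>
        (∑ i ∈ Finset.range (k+1), (k.choose i : ℝ) * (-1:ℝ)^i * Psi ((i:ℝ)*s)) / s^k)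
      (nhdsWithin 0 {(0:ℝ)}ᶜ) (nhds ((-1:ℝ)^k * ((bernoulli k : ℚ) : ℝ))) := by
  set B : ℝ := ((bernoulli k : ℚ) : ℝ)
  set P : ℝ → ℝ := bser.partialSum (k+1) with hPdef
  -- polynomial part
  have G1 : ∀ s : ℝ, ∑ i ∈ Finset.range (k+1), (k.choose i : ℝ) * (-1:ℝ)^i * P ((i:ℝ)*s)
      = (-1:ℝ)^k * B * s^k := by
    intro s
    have step1 : ∀ i ∈ Finset.range (k+1), (k.choose i : ℝ) * (-1:ℝ)^i * P ((i:ℝ)*s)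
        = ∑ j ∈ Finset.range (k+1),
            bcoef j * s^j * ((-1:ℝ)^i * (k.choose i : ℝ) * (i:ℝ)^j) := by
      intro i _
      rw [hPdef, partialSum_eq, Finset.mul_sum]
      refine Finset.sum_congr rfl fun j _ => by rw [mul_pow]; ring
    rw [Finset.sum_congr rfl step1, Finset.sum_comm]
    have step2 : ∀ j ∈ Finset.range (k+1),
        (∑ i ∈ Finset.range (k+1), bcoef j * s^j * ((-1:ℝ)^i * (k.choose i : ℝ) * (i:ℝ)^j))
        = bcoef j * s^j * Dd k j := by
      intro j _
      rw [← Finset.mul_sum, Dd]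
    rw [Finset.sum_congr rfl step2]
    rw [Finset.sum_eq_single k (fun j hmem hne => by
      have hlt := Finset.mem_range.mp hmem
      rw [Dd_eq_zero (by omega), mul_zero]) (fun h => absurd (Finset.self_mem_range_succ k) h)]
    rw [Dd_self, bcoef]
    have : (k.factorial : ℝ) ≠ 0 := by positivity
    field_simp
    ring
  -- remainder part
  have hR : (fun y : ℝ => Psi y - P y) =O[nhds 0] fun y => ‖y‖^(k+1) := by
    have := hPsi.hasFPowerSeriesAt.isBigO_sub_partialSum_pow (k+1)
    simpa using this
  have hRo : (fun y : ℝ => Psi y - P y) =o[nhds 0] fun y => y^k := by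
    have h2 : (fun y : ℝ => Psi y - P y) =o[nhds 0] fun y => ‖y‖^k :=
      hR.trans_isLittleO (isLittleO_norm_pow_norm_pow (Nat.lt_succ_self k))
    exact IsLittleO.of_norm_right (by simpa only [norm_pow] using h2)
  have G2 : (fun s : ℝ => ∑ i ∈ Finset.range (k+1),
      (k.choose i : ℝ) * (-1:ℝ)^i * (Psi ((i:ℝ)*s) - P ((i:ℝ)*s))) =o[nhds 0] fun s => s^k := by
    refine IsLittleO.fun_sum fun i _ => IsLittleO.const_mul_left ?_ _
    have hcomp : (fun s : ℝ => Psi ((i:ℝ)*s) - P ((i:ℝ)*s)) =o[nhds 0]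
        fun s => ((i:ℝ)*s)^k := by
      refine hRo.comp_tendsto ?_
      have : Tendsto (fun s : ℝ => (i:ℝ)*s) (nhds 0) (nhds ((i:ℝ)*0)) :=
        (continuous_const.mul continuous_id).tendsto 0
      simpa using this
    refine hcomp.trans_isBigO ?_
    refine IsBigO.of_bound ((i:ℝ)^k) (Filter.Eventually.of_forall fun s => ?_)
    rw [norm_pow, norm_pow, norm_mul]
    rw [show ‖(i:ℝ)‖ = (i:ℝ) by simp]
    rw [mul_pow]
  have hE : Tendsto (fun s : ℝ => (∑ i ∈ Finset.range (k+1),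
      (k.choose i : ℝ) * (-1:ℝ)^i * (Psi ((i:ℝ)*s) - P ((i:ℝ)*s))) / s^k) (nhds 0) (nhds 0) :=
    G2.tendsto_div_nhds_zero
  have heq : ∀ s : ℝ, s ≠ 0 →
      (∑ i ∈ Finset.range (k+1), (k.choose i : ℝ) * (-1:ℝ)^i * Psi ((i:ℝ)*s)) / s^k
      = (-1:ℝ)^k * B + (∑ i ∈ Finset.range (k+1),
          (k.choose i : ℝ) * (-1:ℝ)^i * (Psi ((i:ℝ)*s) - P ((i:ℝ)*s))) / s^k := by
    intro s hs
    have hsum : ∑ i ∈ Finset.range (k+1), (k.choose i : ℝ) * (-1:ℝ)^i * Psi ((i:ℝ)*s)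
        = (-1:ℝ)^k * B * s^k + ∑ i ∈ Finset.range (k+1),
            (k.choose i : ℝ) * (-1:ℝ)^i * (Psi ((i:ℝ)*s) - P ((i:ℝ)*s)) := by
      rw [← G1 s, ← Finset.sum_add_distrib]
      exact Finset.sum_congr rfl fun i _ => by ring
    rw [hsum, add_div, mul_div_assoc, div_self (pow_ne_zero k hs), mul_one]
  have hfinal : Tendsto (fun s : ℝ => (-1:ℝ)^k * B + (∑ i ∈ Finset.range (k+1),
      (k.choose i : ℝ) * (-1:ℝ)^i * (Psi ((i:ℝ)*s) - P ((i:ℝ)*s))) / s^k)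
      (nhdsWithin 0 {(0:ℝ)}ᶜ) (nhds ((-1:ℝ)^k * B)) := by
    have h5 := (tendsto_const_nhds (α := ℝ) (f := nhdsWithin (0:ℝ) {(0:ℝ)}ᶜ)
      (x := (-1:ℝ)^k * B)).add (hE.mono_left (nhdsWithin_le_nhds (s := {(0:ℝ)}ᶜ)))
    simpa using h5
  refine hfinal.congr' ?_
  filter_upwards [self_mem_nhdsWithin] with s hs
  exact (heq s hs).symm

lemma hslope : Tendsto (fun q : ℝ => Real.log q / (q - 1))
    (nhdsWithin 1 {(1:ℝ)}ᶜ) (nhds 1) := by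
  have h := hasDerivAt_iff_tendsto_slope.mp (Real.hasDerivAt_log one_ne_zero)
  have heq : slope Real.log 1 = fun q : ℝ => Real.log q / (q - 1) := by
    funext x
    rw [slope_def_field, Real.log_one, sub_zero]
  rw [heq, inv_one] at h
  exact h

lemma filter_le : nhdsWithin (1:ℝ) (Set.Ioo 0 1) ≤ nhdsWithin 1 {(1:ℝ)}ᶜ :=
  nhdsWithin_mono 1 (fun x hx => ne_of_lt hx.2)

lemma hslope' : Tendsto (fun q : ℝ => Real.log q / (q - 1))
    (nhdsWithin 1 (Set.Ioo 0 1)) (nhds 1) := hslope.mono_left filter_le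

theorem qBernoulli_tendsto_bernoulli (k : ℕ) :
    Filter.Tendsto (fun q : ℝ => qBernoulli q k) (nhdsWithin 1 (Set.Ioo 0 1))
      (nhds ((bernoulli k : ℚ) : ℝ)) := by
  have hlog : Tendsto Real.log (nhdsWithin 1 (Set.Ioo 0 1)) (nhdsWithin 0 {(0:ℝ)}ᶜ) := by
    rw [tendsto_nhdsWithin_iff]
    constructor
    · have := (Real.continuousAt_log one_ne_zero).tendsto
      rw [Real.log_one] at this
      exact this.mono_left nhdsWithin_le_nhds
    · filter_upwards [self_mem_nhdsWithin] with q hq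
      exact (Real.log_neg hq.1 hq.2).ne
  rcases k with _ | m
  · -- k = 0
    have h0 : ∀ q : ℝ, qBernoulli q 0 = (q - 1) / Real.log q := by
      intro q
      simp [qBernoulli, qc]
    have h1 : Tendsto (fun q : ℝ => (q - 1) / Real.log q)
        (nhdsWithin 1 (Set.Ioo 0 1)) (nhds 1) := by
      have h2 := hslope'.inv₀ one_ne_zero
      rw [inv_one] at h2
      refine h2.congr fun q => ?_
      rw [inv_div]
    simp only [h0]
    simpa using h1
  · -- k = m+1
    set k := m + 1
    set B : ℝ := ((bernoulli k : ℚ) : ℝ) with hB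
    have hA : Tendsto (fun q : ℝ => Real.log q / (1 - q))
        (nhdsWithin 1 (Set.Ioo 0 1)) (nhds (-1)) := by
      have h2 := hslope'.neg
      refine h2.congr fun q => ?_
      rw [show (1:ℝ) - q = -(q - 1) by ring, div_neg]
    have hL := (core_limit k).comp hlog
    have hsmall : ∀ᶠ q in nhdsWithin 1 (Set.Ioo 0 1), |Real.log q| < 1/(k+1) := by
      have h3 : Tendsto Real.log (nhdsWithin 1 (Set.Ioo 0 1)) (nhds 0) :=
        (hlog.mono_right nhdsWithin_le_nhds)
      have := h3 (Metric.ball_mem_nhds 0 (by positivity : (0:ℝ) < 1/(k+1)))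
      filter_upwards [this] with q hq
      simpa [Real.dist_eq] using hq
    have hident : ∀ᶠ q in nhdsWithin 1 (Set.Ioo 0 1),
        qBernoulli q k = -((Real.log q / (1 - q))^m *
          ((∑ i ∈ Finset.range (k+1), (k.choose i : ℝ) * (-1:ℝ)^i * Psi ((i:ℝ)*Real.log q))
            / (Real.log q)^k)) := by
      filter_upwards [self_mem_nhdsWithin, hsmall] with q hq hq2
      obtain ⟨hq0, hq1⟩ := hq
      set s := Real.log q with hs
      have hsne : s ≠ 0 := (Real.log_neg hq0 hq1).ne
      have h1q : (1:ℝ) - q ≠ 0 := by intro h; apply absurd hq1; rw [show q = 1 by linarith]; simp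
      have qc_eq : ∀ i ∈ Finset.range (k+1), qc q i = ((q-1)/s) * Psi ((i:ℝ)*s) := by
        intro i hi
        have hik : i ≤ k := by simpa [Nat.lt_succ_iff] using Finset.mem_range.mp hi
        match i with
        | 0 => simp [qc, Psi_zero, hs]
        | (i' + 1) =>
          have hyl : |(((i'+1:ℕ)):ℝ) * s| < 1 := by
            rw [abs_mul, abs_of_nonneg (by positivity : (0:ℝ) ≤ ((i'+1:ℕ):ℝ))]
            have hle : ((i'+1:ℕ):ℝ) ≤ (k:ℝ) + 1 := by
              have h6 : i' + 1 ≤ k + 1 := by omega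
              exact_mod_cast h6
            have habs : 0 ≤ |s| := abs_nonneg s
            calc ((i'+1:ℕ):ℝ) * |s| ≤ ((k:ℝ)+1) * |s| := by nlinarith
              _ < ((k:ℝ)+1) * (1/((k:ℝ)+1)) := by
                  have hk1 : (0:ℝ) < (k:ℝ)+1 := by positivity
                  apply mul_lt_mul_of_pos_left _ hk1
                  simpa using hq2
              _ = 1 := by field_simp
          have hqpow : q ^ (i'+1) < 1 := pow_lt_one₀ (le_of_lt hq0) hq1 (Nat.succ_ne_zero i')
          have hqne : q ^ (i'+1) - 1 ≠ 0 := by linarith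
          have hqne2 : (1:ℝ) - q ^ (i'+1) ≠ 0 := by linarith
          have hexp : Real.exp ((((i'+1:ℕ)):ℝ) * s) = q ^ (i'+1) := by
            rw [Real.exp_nat_mul, Real.exp_log hq0]
          have hPsival := Psi_mul hyl
          rw [hexp] at hPsival
          have hPsi2 : Psi ((((i'+1:ℕ)):ℝ) * s) = (((i'+1:ℕ)):ℝ) * s / (q ^ (i'+1) - 1) := by
            rw [eq_div_iff hqne]; exact hPsival
          show ((i' : ℝ) + 1) / qnum q ((i' : ℝ) + 1) = ((q-1)/s) * Psi ((((i'+1:ℕ)):ℝ)*s)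
          rw [hPsi2, qnum]
          rw [show ((i':ℝ) + 1) = (((i'+1:ℕ)):ℝ) by push_cast; ring]
          rw [Real.rpow_natCast]
          field_simp
          ring
      have hform : qBernoulli q k = (1-q)⁻¹^k * ((q-1)/s *
          (∑ i ∈ Finset.range (k+1), (k.choose i : ℝ) * (-1:ℝ)^i * Psi ((i:ℝ)*s))) := by
        rw [qBernoulli, Finset.sum_congr rfl (fun i hi => by rw [qc_eq i hi])]
        congr 1
        rw [Finset.mul_sum]
        exact Finset.sum_congr rfl fun i _ => by ring
      rw [hform]
      have hpow : (1-q)⁻¹^k ≠ 0 := by positivity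
      field_simp
      have hA1 : (1 - q)⁻¹ * (1 - q) = 1 := inv_mul_cancel₀ h1q
      have hsk : s ^ k = s ^ m * s := pow_succ s m
      have hAk : (1 / (1 - q)) ^ k = (1 / (1 - q)) ^ m * (1 / (1 - q)) := pow_succ _ m
      rw [hsk, hAk]
      linear_combination (-((1 - q)⁻¹ ^ m * s ^ m * s * ∑ x ∈ range (k + 1), (k.choose x : ℝ) * (-1) ^ x * Psi (s * ↑x))) * hA1
    have hfin := ((hA.pow m).mul hL).neg
    have hval : -((-1:ℝ)^m * ((-1:ℝ)^k * B)) = B := by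
      rw [show k = m + 1 from rfl, ← mul_assoc, ← pow_add,
        show m + (m+1) = 2*m+1 by omega, pow_succ, pow_mul]
      norm_num
    rw [hval] at hfin
    exact hfin.congr' (by filter_upwards [hident] with q hq; exact hq.symm)
end
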